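/- arXiv:math/0610581 — 12 statements merged into one kernel-verified Lean document; each statement's English description precedes it below -/
import Mathlib

section
/- For positive integers n and d with d dividing n, say d is an S-divisor of n if gcd(d, n/d) ∈ S. If S is multiplicative (i.e., 1 ∈ S and the characteristic function ρ_S of S is multiplicative), then the S-convolution of two multiplicative arithmetic functions is multiplicative. -/
open Finset
open scoped Classical

/-- Characteristic function of `S` (complex-valued). -/
noncomputable def rho (S : Set ℕ) (n : ℕ) : ℂ :=
  if n ∈ S then 1 else 0

/-- The `S`-convolution of arithmetic functions. -/
noncomputable def sconv (S : Set ℕ) (f g : ℕ → ℂ) (n : ℕ) : ℂ :=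
  ∑ d ∈ n.divisors, rho S (Nat.gcd d (n / d)) * f d * g (n / d)

/-- A multiplicative arithmetic function. -/
def IsMult (f : ℕ → ℂ) : Prop :=
  f 1 = 1 ∧ ∀ m n : ℕ, Nat.Coprime m n → f (m * n) = f m * f n

lemma gcd_mul_mul_aux {m n a b c d : ℕ} (cop : m.Coprime n)
    (ha : a ∣ m) (hb : b ∣ n) (hc : c ∣ m) (hd : d ∣ n) :
    (a * b).gcd (c * d) = a.gcd c * b.gcd d := by
  have hcd : c.Coprime d := Nat.Coprime.coprime_dvd_left hc (cop.coprime_dvd_right hd)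
  have hbc : b.Coprime c := Nat.Coprime.coprime_dvd_left hb (cop.symm.coprime_dvd_right hc)
  have had : a.Coprime d := Nat.Coprime.coprime_dvd_left ha (cop.coprime_dvd_right hd)
  rw [hcd.gcd_mul (a * b), Nat.Coprime.gcd_mul_right_cancel a hbc,
    Nat.Coprime.gcd_mul_left_cancel b had]

theorem sconv_isMult (S : Set ℕ) (hS1 : 1 ∈ S)
    (hSmul : ∀ m n : ℕ, Nat.Coprime m n → rho S (m * n) = rho S m * rho S n)
    (f g : ℕ → ℂ) (hf : IsMult f) (hg : IsMult g) :
    IsMult (sconv S f g) := by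
  constructor
  · simp [sconv, rho, hS1, hf.1, hg.1]
  intro m n cop
  rcases eq_or_ne m 0 with rfl | hm
  · have hn1 : n = 1 := by simpa [Nat.coprime_zero_left] using cop
    subst hn1
    simp [sconv]
  rcases eq_or_ne n 0 with rfl | hn
  · have hm1 : m = 1 := by simpa [Nat.coprime_zero_right] using cop
    subst hm1
    simp [sconv]
  unfold sconv
  rw [Finset.sum_mul_sum, ← Finset.sum_product']
  symm
  refine Finset.sum_nbij' (fun p => p.1 * p.2) (fun d => (d.gcd m, d.gcd n)) ?_ ?_ ?_ ?_ ?_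
  · rintro ⟨a, b⟩ hp
    rw [Finset.mem_product, Nat.mem_divisors, Nat.mem_divisors] at hp
    exact Nat.mem_divisors.2 ⟨mul_dvd_mul hp.1.1 hp.2.1, mul_ne_zero hm hn⟩
  · intro d hd
    rw [Nat.mem_divisors] at hd
    rw [Finset.mem_product, Nat.mem_divisors, Nat.mem_divisors]
    exact ⟨⟨Nat.gcd_dvd_right _ _, hm⟩, ⟨Nat.gcd_dvd_right _ _, hn⟩⟩
  · rintro ⟨a, b⟩ hp
    rw [Finset.mem_product, Nat.mem_divisors, Nat.mem_divisors] at hp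
    obtain ⟨⟨ha, -⟩, hb, -⟩ := hp
    have hbm : b.Coprime m := Nat.Coprime.coprime_dvd_left hb cop.symm
    have han : a.Coprime n := Nat.Coprime.coprime_dvd_left ha cop
    have h1 : (a * b).gcd m = a := by
      rw [Nat.Coprime.gcd_mul_right_cancel a hbm, Nat.gcd_eq_left ha]
    have h2 : (a * b).gcd n = b := by
      rw [Nat.Coprime.gcd_mul_left_cancel b han, Nat.gcd_eq_left hb]
    simp [h1, h2]
  · intro d hd
    rw [Nat.mem_divisors] at hd
    have := (cop.gcd_mul d).symm
    rw [Nat.gcd_eq_left hd.1] at this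
    exact this
  · rintro ⟨a, b⟩ hp
    rw [Finset.mem_product, Nat.mem_divisors, Nat.mem_divisors] at hp
    obtain ⟨⟨ha, -⟩, hb, -⟩ := hp
    have hab : a.Coprime b := Nat.Coprime.coprime_dvd_left ha (cop.coprime_dvd_right hb)
    have hdiv : m * n / (a * b) = (m / a) * (n / b) := (Nat.div_mul_div_comm ha hb).symm
    have hgcd : (a * b).gcd (m * n / (a * b)) = a.gcd (m / a) * b.gcd (n / b) := by
      rw [hdiv]
      exact gcd_mul_mul_aux cop ha hb (Nat.div_dvd_of_dvd ha) (Nat.div_dvd_of_dvd hb)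
    have hcop2 : (a.gcd (m / a)).Coprime (b.gcd (n / b)) :=
      Nat.Coprime.coprime_dvd_left ((Nat.gcd_dvd_left _ _).trans ha)
        (cop.coprime_dvd_right ((Nat.gcd_dvd_left _ _).trans hb))
    have hcopdiv : (m / a).Coprime (n / b) :=
      Nat.Coprime.coprime_dvd_left (Nat.div_dvd_of_dvd ha)
        (cop.coprime_dvd_right (Nat.div_dvd_of_dvd hb))
    rw [hgcd, hdiv, hSmul _ _ hcop2, hf.2 _ _ hab, hg.2 _ _ hcopdiv]
    ring
end

section
/- Suppose the S-convolution preserves multiplicativity of arithmetic functions, i.e., whenever f and g are multiplicative then f *_S g is multiplicative, and 1 ∈ S. Then S is multiplicative: ρ_S(MN) = ρ_S(M)ρ_S(N) for all coprime positive integers M, N. -/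
open Finset
open scoped Classical

/-- Indicator of divisors of `K`. -/
noncomputable def ind (K : ℕ) (n : ℕ) : ℂ :=
  if n ∣ K then 1 else 0

lemma ind_isMult (K : ℕ) : IsMult (ind K) := by
  refine ⟨by simp [ind], fun m n hmn => ?_⟩
  by_cases hm : m ∣ K
  · by_cases hn : n ∣ K
    · simp [ind, hm, hn, hmn.mul_dvd_of_dvd_of_dvd hm hn]
    · have : ¬ m * n ∣ K := fun hd => hn (dvd_trans (dvd_mul_left n m) hd)
      simp [ind, this, hn]
  · have : ¬ m * n ∣ K := fun hd => hm (dvd_trans (dvd_mul_right m n) hd)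
    simp [ind, this, hm]

lemma key (S : Set ℕ) (k K : ℕ) (hk : 0 < k) (hkK : k ∣ K)
    (hcop : Nat.Coprime k (K / k)) :
    sconv S (ind K) (ind K) (k * k) = rho S k := by
  have hkk : k * k ≠ 0 := by positivity
  have hkmem : k ∈ (k * k).divisors := Nat.mem_divisors.mpr ⟨dvd_mul_left k k, hkk⟩
  have hdiv : (k * k) / k = k := Nat.mul_div_cancel_left k hk
  unfold sconv
  rw [Finset.sum_eq_single k]
  · rw [hdiv, Nat.gcd_self]
    simp [ind, hkK]
  · intro d hd hne
    rcases Nat.mem_divisors.mp hd with ⟨hdk2, _⟩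
    by_cases h1 : d ∣ K
    · by_cases h2 : (k * k) / d ∣ K
      · exfalso
        apply hne
        have hKeq : k * (K / k) = K := Nat.mul_div_cancel' hkK
        have hcop2 : Nat.Coprime (k * k) (K / k) := Nat.Coprime.mul hcop hcop
        -- d ∣ k
        have hcd : Nat.Coprime d (K / k) := Nat.Coprime.coprime_dvd_left hdk2 hcop2
        have hdk : d ∣ k := hcd.dvd_of_dvd_mul_right (by rw [hKeq]; exact h1)
        -- (k*k)/d ∣ k
        have hedvd : (k * k) / d ∣ k * k := Nat.div_dvd_of_dvd hdk2
        have hce : Nat.Coprime ((k * k) / d) (K / k) :=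
          Nat.Coprime.coprime_dvd_left hedvd hcop2
        have hek : (k * k) / d ∣ k := hce.dvd_of_dvd_mul_right (by rw [hKeq]; exact h2)
        have hde : d * ((k * k) / d) = k * k := Nat.mul_div_cancel' hdk2
        have hepos : 0 < (k * k) / d := by
          rcases Nat.eq_zero_or_pos ((k * k) / d) with h0 | h0
          · rw [h0, Nat.mul_zero] at hde; exact absurd hde.symm hkk
          · exact h0
        have hle1 : d ≤ k := Nat.le_of_dvd hk hdk
        have hle2 : (k * k) / d ≤ k := Nat.le_of_dvd hk hek
        have : k * k ≤ d * k := by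
          calc k * k = d * ((k * k) / d) := hde.symm
            _ ≤ d * k := Nat.mul_le_mul_left d hle2
        have hle3 : k ≤ d := Nat.le_of_mul_le_mul_right this hk
        omega
      · simp [ind, h2]
    · simp [ind, h1]
  · intro hk'; exact absurd hkmem hk'

theorem multiplicative_of_sconv_preserves_mult (S : Set ℕ) (hS1 : 1 ∈ S)
    (h : ∀ f g : ℕ → ℂ, IsMult f → IsMult g → IsMult (sconv S f g)) :
    ∀ M N : ℕ, 0 < M → 0 < N → Nat.Coprime M N →
      rho S (M * N) = rho S M * rho S N := by
  intro M N hM hN hcop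
  have hMN : 0 < M * N := Nat.mul_pos hM hN
  have hF := h (ind (M * N)) (ind (M * N)) (ind_isMult _) (ind_isMult _)
  have h1 : sconv S (ind (M * N)) (ind (M * N)) ((M * N) * (M * N)) = rho S (M * N) :=
    key S (M * N) (M * N) hMN dvd_rfl (by
      rw [Nat.div_self hMN]; exact Nat.coprime_one_right _)
  have h2 : sconv S (ind (M * N)) (ind (M * N)) (M * M) = rho S M :=
    key S M (M * N) hM ⟨N, rfl⟩ (by
      rw [Nat.mul_div_cancel_left N hM]; exact hcop)
  have h3 : sconv S (ind (M * N)) (ind (M * N)) (N * N) = rho S N :=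
    key S N (M * N) hN ⟨M, Nat.mul_comm M N⟩ (by
      rw [Nat.mul_comm M N, Nat.mul_div_cancel_left M hN]; exact hcop.symm)
  have hc2 : Nat.Coprime (M * M) (N * N) :=
    Nat.Coprime.mul (hcop.mul_right hcop) (hcop.mul_right hcop)
  calc rho S (M * N) = sconv S (ind (M * N)) (ind (M * N)) ((M * N) * (M * N)) := h1.symm
    _ = sconv S (ind (M * N)) (ind (M * N)) ((M * M) * (N * N)) := by
        rw [show (M * N) * (M * N) = (M * M) * (N * N) by ring]
    _ = sconv S (ind (M * N)) (ind (M * N)) (M * M) *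
        sconv S (ind (M * N)) (ind (M * N)) (N * N) := hF.2 _ _ hc2
    _ = rho S M * rho S N := by rw [h2, h3]
end

section
/- The S-convolution preserves multiplicativity of functions if and only if the identity ρ_S(gcd(de, mn/(de))) = ρ_S(gcd(d, m/d)) · ρ_S(gcd(e, n/e)) holds for all positive integers m, n, d, e with gcd(m,n) = 1, d | m, and e | n. -/
open Finset
open scoped Classical

/-- The indicator of divisors of a fixed number is multiplicative. -/
lemma isMult_divInd (N : ℕ) : IsMult (fun k => if k ∣ N then (1:ℂ) else 0) := by
  refine ⟨by simp, fun a b hab => ?_⟩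
  have hiff : a * b ∣ N ↔ a ∣ N ∧ b ∣ N :=
    ⟨fun h => ⟨(dvd_mul_right a b).trans h, (dvd_mul_left b a).trans h⟩,
     fun h => hab.mul_dvd_of_dvd_of_dvd h.1 h.2⟩
  by_cases h1 : a ∣ N <;> by_cases h2 : b ∣ N <;>
    simp [hiff, h1, h2]

lemma dvd_of_div_dvd_div {N t u : ℕ} (hN : 0 < N) (ht : t ∣ N) (hu : u ∣ N)
    (h : N / t ∣ N / u) : u ∣ t := by
  obtain ⟨s, hs⟩ := h
  have h1 : t * (N / t) = N := Nat.mul_div_cancel' ht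
  have h2 : u * (N / u) = N := Nat.mul_div_cancel' hu
  have hNt : 0 < N / t := Nat.div_pos (Nat.le_of_dvd hN ht) (Nat.pos_of_dvd_of_pos ht hN)
  have : u * s * (N / t) = t * (N / t) := by
    calc u * s * (N / t) = u * (N / t * s) := by ring
      _ = u * (N / u) := by rw [← hs]
      _ = N := h2
      _ = t * (N / t) := h1.symm
  exact ⟨s, (Nat.eq_of_mul_eq_mul_right hNt this).symm⟩

lemma gcd_mul_eq {m n d e : ℕ} (cop : m.Coprime n) (hd : d ∣ m) (he : e ∣ n) :
    Nat.gcd m (d * e) = d := by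
  have h1 : Nat.Coprime e m := (cop.coprime_dvd_right he).symm
  rw [h1.gcd_mul_right_cancel_right d, Nat.gcd_eq_right hd]

lemma sconv_eq_single (S : Set ℕ) (f g : ℕ → ℂ) {N u : ℕ} (hN : N ≠ 0) (hu : u ∣ N)
    (h : ∀ t ∈ N.divisors, t ≠ u → rho S (Nat.gcd t (N / t)) * f t * g (N / t) = 0) :
    sconv S f g N = rho S (Nat.gcd u (N / u)) * f u * g (N / u) :=
  Finset.sum_eq_single_of_mem u (Nat.mem_divisors.mpr ⟨hu, hN⟩) h

lemma sum_divisors_mul_coprime {m n : ℕ} (hm : m ≠ 0) (hn : n ≠ 0) (cop : m.Coprime n)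
    (F : ℕ → ℂ) :
    ∑ t ∈ (m * n).divisors, F t = ∑ d ∈ m.divisors, ∑ e ∈ n.divisors, F (d * e) := by
  rw [← Finset.sum_product']
  refine Finset.sum_bij' (fun t _ => (t.gcd m, t.gcd n)) (fun p _ => p.1 * p.2)
    ?_ ?_ ?_ ?_ ?_
  · intro t ht
    rw [Nat.mem_divisors] at ht
    simp only [Finset.mem_product, Nat.mem_divisors]
    exact ⟨⟨Nat.gcd_dvd_right _ _, hm⟩, ⟨Nat.gcd_dvd_right _ _, hn⟩⟩
  · rintro ⟨d, e⟩ hp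
    simp only [Finset.mem_product, Nat.mem_divisors] at hp
    exact Nat.mem_divisors.mpr ⟨mul_dvd_mul hp.1.1 hp.2.1, mul_ne_zero hm hn⟩
  · intro t ht
    rw [Nat.mem_divisors] at ht
    exact ((cop.gcd_mul t).symm.trans (Nat.gcd_eq_left ht.1))
  · rintro ⟨d, e⟩ hp
    simp only [Finset.mem_product, Nat.mem_divisors] at hp
    have h1 : (d * e).gcd m = d := by
      rw [Nat.gcd_comm]; exact gcd_mul_eq cop hp.1.1 hp.2.1
    have h2 : (d * e).gcd n = e := by
      rw [Nat.gcd_comm, mul_comm d e]; exact gcd_mul_eq cop.symm hp.2.1 hp.1.1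
    simp [h1, h2]
  · intro t ht
    rw [Nat.mem_divisors] at ht
    rw [(cop.gcd_mul t).symm.trans (Nat.gcd_eq_left ht.1)]

theorem sconv_preserves_mult_iff (S : Set ℕ) (hS1 : 1 ∈ S) :
    (∀ f g : ℕ → ℂ, IsMult f → IsMult g → IsMult (sconv S f g)) ↔
      (∀ m n d e : ℕ, 0 < m → 0 < n → Nat.Coprime m n → d ∣ m → e ∣ n →
        rho S (Nat.gcd (d * e) (m * n / (d * e))) =
          rho S (Nat.gcd d (m / d)) * rho S (Nat.gcd e (n / e))) := by
  have hrho1 : rho S 1 = 1 := if_pos hS1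
  constructor
  · intro H m n d e hm hn cop hd he
    set M := (m / d) * (n / e) with hMdef
    set f : ℕ → ℂ := fun k => if k ∣ d * e then (1:ℂ) else 0 with hf
    set g : ℕ → ℂ := fun k => if k ∣ M then (1:ℂ) else 0 with hg
    have hmult := H f g (isMult_divInd _) (isMult_divInd _)
    have hMeq : m * n / (d * e) = M := Nat.div_mul_div_comm hd he ▸ rfl
    have hmd : m / d ∣ M := dvd_mul_right _ _
    have hne : n / e ∣ M := dvd_mul_left _ _
    -- sconv at m
    have hA : sconv S f g m = rho S (Nat.gcd d (m / d)) := by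
      rw [sconv_eq_single S f g hm.ne' hd]
      · have : f d = 1 := if_pos (dvd_mul_right d e)
        have h2 : g (m / d) = 1 := if_pos hmd
        rw [this, h2, mul_one, mul_one]
      · intro t ht htd
        rw [Nat.mem_divisors] at ht
        by_cases h1 : t ∣ d * e
        · by_cases h2 : m / t ∣ M
          · exfalso
            have htd' : t ∣ d := (Nat.dvd_gcd ht.1 h1).trans (gcd_mul_eq cop hd he).dvd
            have hcop2 : Nat.Coprime (m / t) (n / e) :=
              (cop.coprime_dvd_left (Nat.div_dvd_of_dvd ht.1)).coprime_dvd_right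
                (Nat.div_dvd_of_dvd he)
            have h3 : m / t ∣ m / d := hcop2.dvd_of_dvd_mul_right h2
            have hdt : d ∣ t := dvd_of_div_dvd_div hm ht.1 hd h3
            exact htd (Nat.dvd_antisymm htd' hdt)
          · have : g (m / t) = 0 := if_neg h2
            rw [this, mul_zero]
        · have : f t = 0 := if_neg h1
          rw [this, mul_zero, zero_mul]
    -- sconv at n
    have hB : sconv S f g n = rho S (Nat.gcd e (n / e)) := by
      rw [sconv_eq_single S f g hn.ne' he]
      · have : f e = 1 := if_pos (dvd_mul_left e d)
        have h2 : g (n / e) = 1 := if_pos hne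
        rw [this, h2, mul_one, mul_one]
      · intro t ht hte
        rw [Nat.mem_divisors] at ht
        by_cases h1 : t ∣ d * e
        · by_cases h2 : n / t ∣ M
          · exfalso
            have hte' : t ∣ e := by
              have := Nat.dvd_gcd ht.1 (by rwa [mul_comm] at h1 : t ∣ e * d)
              exact this.trans (gcd_mul_eq cop.symm he hd).dvd
            have hcop2 : Nat.Coprime (n / t) (m / d) :=
              (cop.symm.coprime_dvd_left (Nat.div_dvd_of_dvd ht.1)).coprime_dvd_right
                (Nat.div_dvd_of_dvd hd)
            have h3 : n / t ∣ n / e := hcop2.dvd_of_dvd_mul_left h2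
            have het : e ∣ t := dvd_of_div_dvd_div hn ht.1 he h3
            exact hte (Nat.dvd_antisymm hte' het)
          · have : g (n / t) = 0 := if_neg h2
            rw [this, mul_zero]
        · have : f t = 0 := if_neg h1
          rw [this, mul_zero, zero_mul]
    -- sconv at m * n
    have hmn : 0 < m * n := Nat.mul_pos hm hn
    have hde : d * e ∣ m * n := mul_dvd_mul hd he
    have hC : sconv S f g (m * n) = rho S (Nat.gcd (d * e) (m * n / (d * e))) := by
      rw [sconv_eq_single S f g hmn.ne' hde]
      · have : f (d * e) = 1 := if_pos dvd_rfl
        have h2 : g (m * n / (d * e)) = 1 := by rw [hMeq]; exact if_pos dvd_rfl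
        rw [this, h2, mul_one, mul_one]
      · intro t ht htde
        rw [Nat.mem_divisors] at ht
        by_cases h1 : t ∣ d * e
        · by_cases h2 : m * n / t ∣ M
          · exfalso
            have h2' : m * n / t ∣ m * n / (d * e) := by rwa [hMeq]
            have hdet : d * e ∣ t := dvd_of_div_dvd_div hmn ht.1 hde h2'
            exact htde (Nat.dvd_antisymm h1 hdet)
          · have : g (m * n / t) = 0 := if_neg h2
            rw [this, mul_zero]
        · have : f t = 0 := if_neg h1
          rw [this, mul_zero, zero_mul]
    have := hmult.2 m n cop
    rw [hA, hB, hC] at this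
    exact this
  · intro H f g hf hg
    constructor
    · simp [sconv, Nat.divisors_one, hrho1, hf.1, hg.1]
    · intro m n cop
      rcases Nat.eq_zero_or_pos m with rfl | hm
      · simp [sconv]
      rcases Nat.eq_zero_or_pos n with rfl | hn
      · simp [sconv]
      have key : sconv S f g (m * n) =
          ∑ d ∈ m.divisors, ∑ e ∈ n.divisors,
            rho S (Nat.gcd (d * e) (m * n / (d * e))) * f (d * e) * g (m * n / (d * e)) :=
        sum_divisors_mul_coprime hm.ne' hn.ne' cop _
      rw [key]
      unfold sconv
      rw [Finset.sum_mul_sum]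
      refine Finset.sum_congr rfl fun d hd' => Finset.sum_congr rfl fun e he' => ?_
      rw [Nat.mem_divisors] at hd' he'
      have hd := hd'.1
      have he := he'.1
      have hMeq : m * n / (d * e) = (m / d) * (n / e) := (Nat.div_mul_div_comm hd he).symm
      have hcopde : Nat.Coprime d e := (cop.coprime_dvd_left hd).coprime_dvd_right he
      have hcopM : Nat.Coprime (m / d) (n / e) :=
        (cop.coprime_dvd_left (Nat.div_dvd_of_dvd hd)).coprime_dvd_right
          (Nat.div_dvd_of_dvd he)
      rw [H m n d e hm hn cop hd he, hf.2 d e hcopde, hMeq, hg.2 _ _ hcopM]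
      ring
end

section
/- If S is multiplicative and for every prime p and every j ≥ 1, p^j ∈ S implies p^ℓ ∈ S for all ℓ > j, then the S-convolution is associative: (f *_S g) *_S h = f *_S (g *_S h) for all arithmetic functions f, g, h. -/
open Finset
open scoped Classical

lemma rho_mul_rho {S : Set ℕ} (x y : ℕ) :
    rho S x * rho S y = if x ∈ S ∧ y ∈ S then 1 else 0 := by
  unfold rho
  split_ifs with h1 h2 h3 <;> simp_all

lemma prime_pow_key {S : Set ℕ} (hS1 : 1 ∈ S)
    (hup : ∀ p : ℕ, p.Prime → ∀ j : ℕ, 1 ≤ j → p ^ j ∈ S → ∀ ℓ : ℕ, j < ℓ → p ^ ℓ ∈ S)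
    {p : ℕ} (hp : p.Prime) (i j k : ℕ) :
    rho S (p ^ min i j) * rho S (p ^ min (i + j) k)
      = rho S (p ^ min j k) * rho S (p ^ min i (j + k)) := by
  have hup' : ∀ a b : ℕ, 1 ≤ a → a ≤ b → p ^ a ∈ S → p ^ b ∈ S := by
    intro a b h1 hab hA
    rcases eq_or_lt_of_le hab with rfl | hlt
    · exact hA
    · exact hup p hp a h1 hA b hlt
  have h0 : p ^ (0 : ℕ) ∈ S := by simpa using hS1
  have dir : ∀ i j k : ℕ, p ^ min i j ∈ S → p ^ min (i + j) k ∈ S →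
      p ^ min j k ∈ S ∧ p ^ min i (j + k) ∈ S := by
    intro i j k h1 h2
    rcases Nat.eq_zero_or_pos j with rfl | hj
    · constructor
      · simpa using h0
      · simpa using h2
    rcases Nat.eq_zero_or_pos i with rfl | hi
    · constructor
      · simpa using h2
      · simpa using h0
    rcases Nat.eq_zero_or_pos k with rfl | hk
    · constructor
      · simpa using h0
      · simpa using h1
    constructor
    · rcases le_or_gt j k with h | h
      · exact hup' (min i j) (min j k) (by omega) (by omega) h1
      · exact hup' (min (i + j) k) (min j k) (by omega) (by omega) h2
    · exact hup' (min i j) (min i (j + k)) (by omega) (by omega) h1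
  have hiff : (p ^ min i j ∈ S ∧ p ^ min (i + j) k ∈ S)
      ↔ (p ^ min j k ∈ S ∧ p ^ min i (j + k) ∈ S) := by
    constructor
    · intro h; exact dir i j k h.1 h.2
    · intro h
      have e1 : min k j = min j k := by omega
      have e2 : min (k + j) i = min i (j + k) := by omega
      have e3 : min j i = min i j := by omega
      have e4 : min k (j + i) = min (i + j) k := by omega
      have := dir k j i (by rw [e1]; exact h.1) (by rw [e2]; exact h.2)
      exact ⟨by rw [← e3]; exact this.1, by rw [← e4]; exact this.2⟩
  rw [rho_mul_rho, rho_mul_rho, if_congr hiff rfl rfl]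

lemma rho_eq_prod {S : Set ℕ} (hS1 : 1 ∈ S)
    (hSmul : ∀ m n : ℕ, Nat.Coprime m n → rho S (m * n) = rho S m * rho S n)
    {m : ℕ} (hm : m ≠ 0) {P : Finset ℕ} (hP : m.primeFactors ⊆ P) :
    rho S m = ∏ p ∈ P, rho S (p ^ m.factorization p) := by
  have hρ1 : rho S 1 = 1 := by simp [rho, hS1]
  rw [Nat.multiplicative_factorization (rho S) hSmul hρ1 hm, Finsupp.prod]
  apply Finset.prod_subset
  · rw [Nat.support_factorization]; exact hP
  · intro p _ hp
    rw [Finsupp.notMem_support_iff.mp hp, pow_zero, hρ1]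

lemma key_lemma {S : Set ℕ} (hS1 : 1 ∈ S)
    (hSmul : ∀ m n : ℕ, Nat.Coprime m n → rho S (m * n) = rho S m * rho S n)
    (hup : ∀ p : ℕ, p.Prime → ∀ j : ℕ, 1 ≤ j → p ^ j ∈ S → ∀ ℓ : ℕ, j < ℓ → p ^ ℓ ∈ S)
    {a b c : ℕ} (ha : a ≠ 0) (hb : b ≠ 0) (hc : c ≠ 0) :
    rho S (a.gcd b) * rho S ((a * b).gcd c) = rho S (b.gcd c) * rho S (a.gcd (b * c)) := by
  have habc : a * b * c ≠ 0 := by positivity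
  set P := (a * b * c).primeFactors with hPdef
  have hsub : ∀ m : ℕ, m ∣ a * b * c → m.primeFactors ⊆ P :=
    fun m hm => Nat.primeFactors_mono hm habc
  have d1 : a.gcd b ∣ a * b * c := (Nat.gcd_dvd_left a b).trans ⟨b * c, by ring⟩
  have d2 : (a * b).gcd c ∣ a * b * c := (Nat.gcd_dvd_left _ c).trans ⟨c, by ring⟩
  have d3 : b.gcd c ∣ a * b * c := (Nat.gcd_dvd_left b c).trans ⟨a * c, by ring⟩
  have d4 : a.gcd (b * c) ∣ a * b * c := (Nat.gcd_dvd_left a _).trans ⟨b * c, by ring⟩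
  have g1 : a.gcd b ≠ 0 := Nat.gcd_ne_zero_left ha
  have g2 : (a * b).gcd c ≠ 0 := Nat.gcd_ne_zero_right hc
  have g3 : b.gcd c ≠ 0 := Nat.gcd_ne_zero_left hb
  have g4 : a.gcd (b * c) ≠ 0 := Nat.gcd_ne_zero_left ha
  rw [rho_eq_prod hS1 hSmul g1 (hsub _ d1), rho_eq_prod hS1 hSmul g2 (hsub _ d2),
    rho_eq_prod hS1 hSmul g3 (hsub _ d3), rho_eq_prod hS1 hSmul g4 (hsub _ d4),
    ← Finset.prod_mul_distrib, ← Finset.prod_mul_distrib]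
  apply Finset.prod_congr rfl
  intro p hp
  have hpp : p.Prime := Nat.prime_of_mem_primeFactors hp
  have e1 : (a.gcd b).factorization p = min (a.factorization p) (b.factorization p) := by
    rw [Nat.factorization_gcd ha hb]; rfl
  have e2 : ((a * b).gcd c).factorization p
      = min (a.factorization p + b.factorization p) (c.factorization p) := by
    rw [Nat.factorization_gcd (mul_ne_zero ha hb) hc, Nat.factorization_mul ha hb]; rfl
  have e3 : (b.gcd c).factorization p = min (b.factorization p) (c.factorization p) := by
    rw [Nat.factorization_gcd hb hc]; rfl
  have e4 : (a.gcd (b * c)).factorization p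
      = min (a.factorization p) (b.factorization p + c.factorization p) := by
    rw [Nat.factorization_gcd ha (mul_ne_zero hb hc), Nat.factorization_mul hb hc]; rfl
  rw [e1, e2, e3, e4]
  exact prime_pow_key hS1 hup hpp _ _ _

lemma sconv_apply (S : Set ℕ) (f g : ℕ → ℂ) (n : ℕ) :
    sconv S f g n = ∑ x ∈ n.divisorsAntidiagonal, rho S (x.1.gcd x.2) * f x.1 * g x.2 :=
  (Nat.sum_divisorsAntidiagonal fun d e => rho S (d.gcd e) * f d * g e).symm

theorem sconv_assoc_of_mult_and_upward (S : Set ℕ) (hS1 : 1 ∈ S)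
    (hSmul : ∀ m n : ℕ, Nat.Coprime m n → rho S (m * n) = rho S m * rho S n)
    (hup : ∀ p : ℕ, p.Prime → ∀ j : ℕ, 1 ≤ j → p ^ j ∈ S → ∀ ℓ : ℕ, j < ℓ → p ^ ℓ ∈ S) :
    ∀ f g h : ℕ → ℂ, sconv S (sconv S f g) h = sconv S f (sconv S g h) := by
  intro f g h
  funext n
  simp only [sconv_apply, Finset.sum_mul, Finset.mul_sum]
  rw [Finset.sum_sigma', Finset.sum_sigma']
  apply Finset.sum_nbij' (fun x => ⟨(x.2.1, x.2.2 * x.1.2), (x.2.2, x.1.2)⟩)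
    (fun x => ⟨(x.1.1 * x.2.1, x.2.2), (x.1.1, x.2.1)⟩)
  · rintro ⟨⟨i, j⟩, k, l⟩ hmem
    simp only [Finset.mem_sigma, Nat.mem_divisorsAntidiagonal] at hmem
    obtain ⟨⟨hij, hn⟩, hkl, hi⟩ := hmem
    have hj : j ≠ 0 := fun h => hn (by rw [← hij, h, mul_zero])
    have hl : l ≠ 0 := fun h => hi (by rw [← hkl, h, mul_zero])
    simp only [Finset.mem_sigma, Nat.mem_divisorsAntidiagonal]
    exact ⟨⟨by rw [← hij, ← hkl]; ring, hn⟩, trivial, mul_ne_zero hl hj⟩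
  · rintro ⟨⟨i, j⟩, k, l⟩ hmem
    simp only [Finset.mem_sigma, Nat.mem_divisorsAntidiagonal] at hmem
    obtain ⟨⟨hij, hn⟩, hkl, hj⟩ := hmem
    have hi : i ≠ 0 := fun h => hn (by rw [← hij, h, zero_mul])
    have hk : k ≠ 0 := fun h => hj (by rw [← hkl, h, zero_mul])
    simp only [Finset.mem_sigma, Nat.mem_divisorsAntidiagonal]
    exact ⟨⟨by rw [← hij, ← hkl]; ring, hn⟩, trivial, mul_ne_zero hi hk⟩
  · rintro ⟨⟨i, j⟩, k, l⟩ hmem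
    simp only [Finset.mem_sigma, Nat.mem_divisorsAntidiagonal] at hmem
    obtain ⟨⟨hij, hn⟩, hkl, hi⟩ := hmem
    subst hkl
    rfl
  · rintro ⟨⟨i, j⟩, k, l⟩ hmem
    simp only [Finset.mem_sigma, Nat.mem_divisorsAntidiagonal] at hmem
    obtain ⟨⟨hij, hn⟩, hkl, hj⟩ := hmem
    subst hkl
    rfl
  · rintro ⟨⟨i, j⟩, k, l⟩ hmem
    simp only [Finset.mem_sigma, Nat.mem_divisorsAntidiagonal] at hmem
    obtain ⟨⟨hij, hn⟩, hkl, hi⟩ := hmem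
    have hj : j ≠ 0 := fun h => hn (by rw [← hij, h, mul_zero])
    have hk : k ≠ 0 := fun h => hi (by rw [← hkl, h, zero_mul])
    have hl : l ≠ 0 := fun h => hi (by rw [← hkl, h, mul_zero])
    have hkey := key_lemma hS1 hSmul hup hk hl hj
    subst hkl
    simp only
    linear_combination (f k * g l * h j) * hkey
end

section
/- If the S-convolution is associative and 1 ∈ S, then S is multiplicative: for all coprime positive integers M, N, MN ∈ S if and only if M ∈ S and N ∈ S. -/
open Finset
open scoped Classical

noncomputable def delta (k n : ℕ) : ℂ := if n = k then 1 else 0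

lemma sconv_delta (S : Set ℕ) (a b : ℕ) (ha : 0 < a) (hb : 0 < b) (n : ℕ) :
    sconv S (delta a) (delta b) n = rho S (Nat.gcd a b) * delta (a * b) n := by
  unfold sconv delta
  by_cases hn : n = a * b
  · subst hn
    rw [Finset.sum_eq_single a]
    · simp [Nat.mul_div_cancel_left b ha, ha.ne', hb.ne']
    · intro d hd hda
      simp [hda]
    · intro h
      exact absurd (Nat.mem_divisors.mpr ⟨Dvd.intro b rfl, by positivity⟩) h
  · rw [Finset.sum_eq_zero]
    · simp [hn]
    · intro d hd
      by_cases hda : d = a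
      · subst hda
        have hdvd : d ∣ n := (Nat.mem_divisors.mp hd).1
        have : n / d ≠ b := by
          intro h
          apply hn
          rw [← Nat.div_mul_cancel hdvd, h, mul_comm]
        simp [this]
      · simp [hda]

lemma sconv_smul_left (S : Set ℕ) (r : ℂ) (f g : ℕ → ℂ) (n : ℕ) :
    sconv S (fun m => r * f m) g n = r * sconv S f g n := by
  unfold sconv
  rw [Finset.mul_sum]
  exact Finset.sum_congr rfl fun d _ => by ring

lemma sconv_smul_right (S : Set ℕ) (r : ℂ) (f g : ℕ → ℂ) (n : ℕ) :
    sconv S f (fun m => r * g m) n = r * sconv S f g n := by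
  unfold sconv
  rw [Finset.mul_sum]
  exact Finset.sum_congr rfl fun d _ => by ring

lemma rho_assoc (S : Set ℕ)
    (hassoc : ∀ f g h : ℕ → ℂ, sconv S (sconv S f g) h = sconv S f (sconv S g h))
    (a b c : ℕ) (ha : 0 < a) (hb : 0 < b) (hc : 0 < c) :
    rho S (Nat.gcd a b) * rho S (Nat.gcd (a * b) c)
      = rho S (Nat.gcd b c) * rho S (Nat.gcd a (b * c)) := by
  have H := congrFun (hassoc (delta a) (delta b) (delta c)) (a * b * c)
  have h1 : sconv S (delta a) (delta b) = fun n => rho S (Nat.gcd a b) * delta (a * b) n :=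
    funext fun n => sconv_delta S a b ha hb n
  have h2 : sconv S (delta b) (delta c) = fun n => rho S (Nat.gcd b c) * delta (b * c) n :=
    funext fun n => sconv_delta S b c hb hc n
  rw [h1, h2, sconv_smul_left, sconv_smul_right,
    sconv_delta S (a*b) c (by positivity) hc, sconv_delta S a (b*c) ha (by positivity)] at H
  simp only [delta, mul_assoc, if_pos rfl, mul_one] at H
  simpa [mul_assoc] using H

theorem S_multiplicative_of_sconv_assoc (S : Set ℕ) (hS1 : 1 ∈ S)
    (hassoc : ∀ f g h : ℕ → ℂ, sconv S (sconv S f g) h = sconv S f (sconv S g h)) :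
    ∀ M N : ℕ, 0 < M → 0 < N → Nat.Coprime M N → (M * N ∈ S ↔ M ∈ S ∧ N ∈ S) := by
  intro M N hM hN hMN
  have H := rho_assoc S hassoc M N (M * N) hM hN (by positivity)
  rw [Nat.Coprime.gcd_eq_one hMN, Nat.gcd_self, Nat.gcd_eq_left (dvd_mul_left N M),
    Nat.gcd_eq_left ⟨N * N, by ring⟩] at H
  unfold rho at H
  rw [if_pos hS1, one_mul] at H
  constructor
  · intro h
    rw [if_pos h] at H
    by_contra hcon
    rcases Decidable.not_and_iff_or_not.mp hcon with h' | h'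
    · rw [if_neg h', mul_zero] at H; exact one_ne_zero H
    · rw [if_neg h', zero_mul] at H; exact one_ne_zero H
  · rintro ⟨h1, h2⟩
    rw [if_pos h1, if_pos h2, mul_one] at H
    by_contra hcon
    rw [if_neg hcon] at H
    exact one_ne_zero H.symm
end

section
/- Let S be multiplicative and satisfy: for every prime p and j ≥ 1, if p^j ∈ S then p^ℓ ∈ S for all ℓ ≥ j. Then the ring of complex-valued arithmetic functions under pointwise addition and S-convolution has zero divisors if and only if S ≠ ℕ⁺. Specifically, if some prime p ∉ S, then the function f with f(p) = 1 and f(n) = 0 for n ≠ p satisfies f *_S f = 0 though f ≠ 0. -/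
open Finset
open scoped Classical

/-!
If `S` contains every positive integer, `*_S` is Dirichlet convolution, and the ring of arithmetic
functions over a domain has no zero divisors: if `M` and `N` are the least points of the supports
of `f` and `g`, then `(f * g)(M N) = f(M) g(N) ≠ 0`. Otherwise, since `S` is multiplicative and
closed upwards along prime powers, some prime `p` is missing from `S`, and then the indicator
`δ_p` of `p` satisfies `δ_p *_S δ_p = 0`, its only possible contribution being
`ρ_S(gcd(p, p)) = ρ_S(p) = 0` at `n = p²`.
-/

namespace ArithmeticFunction

variable {R : Type*} [Semiring R]

lemma mul_apply_mul_of_eq_zero_of_lt {f g : ArithmeticFunction R} {M N : ℕ}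
    (hf : ∀ m < M, f m = 0) (hg : ∀ n < N, g n = 0) : (f * g) (M * N) = f M * g N := by
  rw [mul_apply, Finset.sum_eq_single (M, N)]
  · rintro ⟨a, b⟩ hab hne
    obtain ⟨habMN, hMN⟩ := Nat.mem_divisorsAntidiagonal.mp hab
    have hM : 0 < M := Nat.pos_of_ne_zero (left_ne_zero_of_mul hMN)
    have hN : 0 < N := Nat.pos_of_ne_zero (right_ne_zero_of_mul hMN)
    by_contra hfg
    have ha : M ≤ a := not_lt.mp fun h => hfg (by simp [hf a h])
    have hb : N ≤ b := not_lt.mp fun h => hfg (by simp [hg b h])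
    have ha' : a ≤ M := Nat.le_of_mul_le_mul_right
      (habMN ▸ Nat.mul_le_mul_left a hb : a * N ≤ M * N) hN
    have hb' : b ≤ N := Nat.le_of_mul_le_mul_left
      (habMN ▸ Nat.mul_le_mul_right b ha : M * b ≤ M * N) hM
    exact hne (Prod.ext (le_antisymm ha' ha) (le_antisymm hb' hb))
  · intro hMN
    obtain hM | hN : M = 0 ∨ N = 0 := by simpa [or_iff_not_imp_left] using hMN
    · simp [hM]
    · simp [hN]

instance [NoZeroDivisors R] : NoZeroDivisors (ArithmeticFunction R) where
  eq_zero_or_eq_zero_of_mul_eq_zero {f g} hfg := by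
    by_contra! ⟨hf, hg⟩
    have hf' : ∃ m, f m ≠ 0 := DFunLike.ne_iff.mp hf
    have hg' : ∃ n, g n ≠ 0 := DFunLike.ne_iff.mp hg
    have key := mul_apply_mul_of_eq_zero_of_lt (fun m hm => not_not.mp (Nat.find_min hf' hm))
      (fun n hn => not_not.mp (Nat.find_min hg' hn))
    rw [hfg, zero_apply, eq_comm] at key
    exact mul_ne_zero (Nat.find_spec hf') (Nat.find_spec hg') key

end ArithmeticFunction

lemma rho_eq_one_iff {S : Set ℕ} {n : ℕ} : rho S n = 1 ↔ n ∈ S := by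
  unfold rho; split_ifs with h <;> simp [h]

lemma sconv_eq_mul_apply {S : Set ℕ} (hS : ∀ n, 0 < n → n ∈ S) (f g : ArithmeticFunction ℂ)
    (n : ℕ) : sconv S f g n = (f * g) n := by
  rw [ArithmeticFunction.mul_apply, Nat.sum_divisorsAntidiagonal (fun a b => f a * g b)]
  refine Finset.sum_congr rfl fun d hd => ?_
  have hgcd : Nat.gcd d (n / d) ∈ S := hS _ (Nat.gcd_pos_of_pos_left _ (Nat.pos_of_mem_divisors hd))
  rw [rho_eq_one_iff.mpr hgcd, one_mul]

lemma sconv_indicator_self_eq_zero {S : Set ℕ} {p : ℕ} (hp : p ∉ S) (n : ℕ) :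
    sconv S (fun m => if m = p then 1 else 0) (fun m => if m = p then 1 else 0) n = 0 := by
  refine Finset.sum_eq_zero fun d _ => ?_
  by_cases hd : d = p ∧ n / d = p
  · obtain ⟨rfl, hnd⟩ := hd
    simp [rho, hnd, hp]
  · rcases not_and_or.mp hd with hd | hd <;> simp [hd]

lemma mem_of_prime_pow_mem {S : Set ℕ} (hS1 : 1 ∈ S)
    (hSmul : ∀ m n : ℕ, Nat.Coprime m n → rho S (m * n) = rho S m * rho S n)
    (hpow : ∀ p k : ℕ, p.Prime → 0 < k → p ^ k ∈ S) {n : ℕ} (hn : 0 < n) : n ∈ S := by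
  induction n using Nat.recOnPosPrimePosCoprime with
  | zero => exact absurd hn (lt_irrefl 0)
  | one => exact hS1
  | prime_pow p k hp hk => exact hpow p k hp hk
  | coprime a b ha hb hab iha ihb =>
    rw [← rho_eq_one_iff, hSmul a b hab, rho_eq_one_iff.mpr (iha (by omega)),
      rho_eq_one_iff.mpr (ihb (by omega)), one_mul]

theorem sconv_zero_divisors_iff (S : Set ℕ) (hSpos : ∀ n ∈ S, 0 < n) (hS1 : 1 ∈ S)
    (hSmul : ∀ m n : ℕ, Nat.Coprime m n → rho S (m * n) = rho S m * rho S n)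
    (hup : ∀ p : ℕ, p.Prime → ∀ j : ℕ, 1 ≤ j → p ^ j ∈ S → ∀ ℓ : ℕ, j ≤ ℓ → p ^ ℓ ∈ S) :
    ((∃ f g : ArithmeticFunction ℂ, f ≠ 0 ∧ g ≠ 0 ∧ ∀ n : ℕ, sconv S f g n = 0) ↔
      S ≠ {n : ℕ | 0 < n}) ∧
    (∀ p : ℕ, p.Prime → p ∉ S →
      ((fun n : ℕ => if n = p then (1 : ℂ) else 0) ≠ 0 ∧
        ∀ n : ℕ, sconv S (fun m => if m = p then 1 else 0)
          (fun m => if m = p then 1 else 0) n = 0)) := by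
  refine ⟨⟨?_, fun hne => ?_⟩, fun p _ hp => ⟨fun h => by simpa using congrFun h p,
    sconv_indicator_self_eq_zero hp⟩⟩
  · rintro ⟨f, g, hf, hg, hfg⟩ hSeq
    refine mul_ne_zero hf hg (ArithmeticFunction.ext fun n => ?_)
    rw [← sconv_eq_mul_apply (S := S) (fun n hn => by rw [hSeq]; exact hn), hfg, ArithmeticFunction.zero_apply]
  · obtain ⟨p, hp, hpS⟩ : ∃ p, p.Prime ∧ p ∉ S := by
      by_contra! hprime
      refine hne (Set.ext fun n => ⟨hSpos n, mem_of_prime_pow_mem hS1 hSmul fun p k hp hk => ?_⟩)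
      exact hup p hp 1 le_rfl (by simpa using hprime p hp) k hk
    let δ : ArithmeticFunction ℂ := ⟨fun n => if n = p then 1 else 0, by simp [hp.ne_zero.symm]⟩
    have hδ : δ ≠ 0 := DFunLike.ne_iff.mpr ⟨p, by simp [δ]⟩
    exact ⟨δ, δ, hδ, hδ, sconv_indicator_self_eq_zero hpS⟩
end

section
/- Let k ≥ 1 and let L_k be the set of k-full numbers: n ∈ L_k iff n = 1 or every prime p dividing n satisfies p^k | n. Let μ_k be the inverse of the constant function 1 under the L_k-convolution. Then μ_k is multiplicative, and for every prime p: μ_k(p^a) = -1 for 1 ≤ a < 2k, and μ_k(p^a) = μ_k(p^{a-1}) - μ_k(p^{a-k}) for a ≥ 2k. -/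
open Finset
open scoped Classical

/-- The set of `k`-full numbers. -/
def Lfull (k : ℕ) : Set ℕ :=
  {n | 0 < n ∧ ∀ p : ℕ, p.Prime → p ∣ n → p ^ k ∣ n}

lemma one_mem_lfull (k : ℕ) : 1 ∈ Lfull k :=
  ⟨one_pos, fun p hp hd => absurd (Nat.eq_one_of_dvd_one hd) hp.ne_one⟩

lemma rho_one (k : ℕ) : rho (Lfull k) 1 = 1 := by simp [rho, one_mem_lfull]

lemma lfull_mul {k x y : ℕ} (cop : Nat.Coprime x y) :
    x * y ∈ Lfull k ↔ x ∈ Lfull k ∧ y ∈ Lfull k := by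
  constructor
  · rintro ⟨hpos, h⟩
    have hx : 0 < x := Nat.pos_of_mul_pos_left (by rwa [mul_comm] at hpos)
    have hy : 0 < y := Nat.pos_of_mul_pos_left hpos
    refine ⟨⟨hx, fun p hp hd => ?_⟩, ⟨hy, fun p hp hd => ?_⟩⟩
    · have hcop : Nat.Coprime (p ^ k) y := ((cop.coprime_dvd_left hd).pow_left k)
      exact hcop.dvd_of_dvd_mul_right (h p hp (hd.mul_right y))
    · have hcop : Nat.Coprime (p ^ k) x := ((cop.symm.coprime_dvd_left hd).pow_left k)
      exact hcop.dvd_of_dvd_mul_left (h p hp (hd.mul_left x))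
  · rintro ⟨⟨hx, h1⟩, ⟨hy, h2⟩⟩
    refine ⟨Nat.mul_pos hx hy, fun p hp hd => ?_⟩
    rcases (Nat.Prime.dvd_mul hp).mp hd with h | h
    · exact (h1 p hp h).mul_right y
    · exact (h2 p hp h).mul_left x

lemma rho_mul {k x y : ℕ} (cop : Nat.Coprime x y) :
    rho (Lfull k) (x * y) = rho (Lfull k) x * rho (Lfull k) y := by
  by_cases hx : x ∈ Lfull k <;> by_cases hy : y ∈ Lfull k <;>
    simp [rho, hx, hy, lfull_mul cop]

lemma gcd_pow_pow (p i j : ℕ) : Nat.gcd (p ^ i) (p ^ j) = p ^ min i j := by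
  rcases le_total i j with h | h
  · rw [min_eq_left h, Nat.gcd_eq_left (pow_dvd_pow p h)]
  · rw [min_eq_right h, Nat.gcd_eq_right (pow_dvd_pow p h)]

lemma lfull_pow {k p : ℕ} (hk : 1 ≤ k) (hp : p.Prime) (m : ℕ) :
    p ^ m ∈ Lfull k ↔ m = 0 ∨ k ≤ m := by
  rcases Nat.eq_zero_or_pos m with rfl | hm
  · simpa using one_mem_lfull k
  · constructor
    · rintro ⟨-, h⟩
      exact Or.inr ((Nat.pow_dvd_pow_iff_le_right hp.one_lt).mp
        (h p hp (dvd_pow_self p hm.ne')))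
    · rintro (rfl | h)
      · simpa using one_mem_lfull k
      · refine ⟨pow_pos hp.pos m, fun q hq hd => ?_⟩
        have hqp : q = p := (Nat.prime_dvd_prime_iff_eq hq hp).mp (hq.dvd_of_dvd_pow hd)
        subst hqp
        exact pow_dvd_pow q h

section
variable (k : ℕ) (hk : 1 ≤ k) (μ : ℕ → ℂ)
    (hμ : ∀ n : ℕ, 0 < n →
      sconv (Lfull k) μ (fun _ => 1) n = if n = 1 then 1 else 0)

include hk hμ

lemma mu_one : μ 1 = 1 := by
  have := hμ 1 one_pos
  simpa [sconv, Nat.divisors_one, rho_one] using this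

lemma eqE {p : ℕ} (hp : p.Prime) {a : ℕ} (ha : 1 ≤ a) :
    μ (p ^ a) + 1 + ∑ i ∈ Icc k (a - k), μ (p ^ i) = 0 := by
  have hne : p ^ a ≠ 1 := (Nat.one_lt_pow (by omega) hp.one_lt).ne'
  have h0 := hμ (p ^ a) (pow_pos hp.pos a)
  rw [if_neg hne] at h0
  rw [sconv] at h0
  rw [Nat.sum_divisors_prime_pow hp] at h0
  have hterm : ∀ i ∈ range (a + 1),
      rho (Lfull k) (Nat.gcd (p ^ i) (p ^ a / p ^ i)) * μ (p ^ i) * 1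
        = if i = 0 ∨ i = a ∨ (k ≤ i ∧ i + k ≤ a) then μ (p ^ i) else 0 := by
    intro i hi
    rw [mem_range] at hi
    have hia : i ≤ a := by omega
    rw [Nat.pow_div hia hp.pos, gcd_pow_pow, mul_one, rho]
    rw [if_congr (lfull_pow hk hp _) rfl rfl]
    by_cases h : i = 0 ∨ i = a ∨ (k ≤ i ∧ i + k ≤ a)
    · rw [if_pos (by omega), if_pos h, one_mul]
    · rw [if_neg (by omega), if_neg h, zero_mul]
  rw [Finset.sum_congr rfl hterm, Finset.sum_ite, Finset.sum_const_zero, add_zero] at h0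
  have hfil : (range (a + 1)).filter (fun i => i = 0 ∨ i = a ∨ (k ≤ i ∧ i + k ≤ a))
      = insert 0 (insert a (Icc k (a - k))) := by
    ext i
    simp only [mem_filter, mem_range, mem_insert, mem_Icc]
    omega
  rw [hfil, Finset.sum_insert (by simp only [mem_insert, mem_Icc]; omega),
    Finset.sum_insert (by simp only [mem_Icc]; omega), pow_zero] at h0
  have h1 := mu_one k hk μ hμ
  rw [h1] at h0
  linear_combination h0

lemma part1 {p : ℕ} (hp : p.Prime) {a : ℕ} (ha1 : 1 ≤ a) (ha2 : a < 2 * k) :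
    μ (p ^ a) = -1 := by
  have h := eqE k hk μ hμ hp ha1
  rw [show Icc k (a - k) = ∅ by rw [Icc_eq_empty_iff]; omega] at h
  simp only [Finset.sum_empty, add_zero] at h
  linear_combination h

lemma part2 {p : ℕ} (hp : p.Prime) {a : ℕ} (ha : 2 * k ≤ a) :
    μ (p ^ a) = μ (p ^ (a - 1)) - μ (p ^ (a - k)) := by
  have h1 := eqE k hk μ hμ hp (show 1 ≤ a by omega)
  have h2 := eqE k hk μ hμ hp (show 1 ≤ a - 1 by omega)
  have hsplit : ∑ i ∈ Icc k (a - k), μ (p ^ i)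
      = ∑ i ∈ Icc k (a - 1 - k), μ (p ^ i) + μ (p ^ (a - k)) := by
    have : a - k = (a - 1 - k) + 1 := by omega
    rw [this, Finset.sum_Icc_succ_top (by omega), ← this]
  rw [hsplit] at h1
  linear_combination h1 - h2

end

-- gcd splitting
lemma gcd_split {m n d1 d2 e1 e2 : ℕ} (cop : Nat.Coprime m n)
    (hd1 : d1 ∣ m) (he1 : e1 ∣ m) (hd2 : d2 ∣ n) (he2 : e2 ∣ n) :
    Nat.gcd (d1 * d2) (e1 * e2) = Nat.gcd d1 e1 * Nat.gcd d2 e2 := by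
  have c1 : Nat.Coprime e1 e2 := (cop.coprime_dvd_left he1).coprime_dvd_right he2
  have c2 : Nat.Coprime d2 e1 := ((cop.symm.coprime_dvd_left hd2).coprime_dvd_right he1)
  have c3 : Nat.Coprime d1 e2 := ((cop.coprime_dvd_left hd1).coprime_dvd_right he2)
  rw [Nat.Coprime.gcd_mul _ c1, Nat.Coprime.gcd_mul_right_cancel _ c2,
    Nat.Coprime.gcd_mul_left_cancel _ c3]

section
variable (k : ℕ) (hk : 1 ≤ k) (μ : ℕ → ℂ)
    (hμ : ∀ n : ℕ, 0 < n →
      sconv (Lfull k) μ (fun _ => 1) n = if n = 1 then 1 else 0)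

include hk hμ in
lemma mu_mult_aux : ∀ N m n : ℕ, m * n = N → Nat.Coprime m n → μ (m * n) = μ m * μ n := by
  have h1 := mu_one k hk μ hμ
  intro N
  induction N using Nat.strong_induction_on with
  | _ N ih =>
    intro m n hN cop
    rcases eq_or_ne m 1 with rfl | hm1
    · rw [one_mul, h1, one_mul]
    rcases eq_or_ne n 1 with rfl | hn1
    · rw [mul_one, h1, mul_one]
    rcases Nat.eq_zero_or_pos m with rfl | hm
    · exact absurd (Nat.coprime_zero_left n |>.mp cop) hn1
    rcases Nat.eq_zero_or_pos n with rfl | hn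
    · exact absurd (Nat.coprime_zero_right m |>.mp cop) hm1
    have hmn1 : m * n ≠ 1 := fun h => hm1 (Nat.eq_one_of_mul_eq_one_right h)
    -- the three convolution identities
    have hA : sconv (Lfull k) μ (fun _ => 1) (m * n) = 0 := by
      rw [hμ (m * n) (Nat.mul_pos hm hn), if_neg hmn1]
    have hBm : sconv (Lfull k) μ (fun _ => 1) m = 0 := by rw [hμ m hm, if_neg hm1]
    have hBn : sconv (Lfull k) μ (fun _ => 1) n = 0 := by rw [hμ n hn, if_neg hn1]
    -- transform the (m*n) sum into a sum over the product of divisor sets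
    set F : ℕ × ℕ → ℂ := fun x =>
      rho (Lfull k) (Nat.gcd x.1 (m / x.1)) * rho (Lfull k) (Nat.gcd x.2 (n / x.2))
        * μ (x.1 * x.2) with hF
    have hAtrans : sconv (Lfull k) μ (fun _ => 1) (m * n)
        = ∑ x ∈ m.divisors ×ˢ n.divisors, F x := by
      rw [sconv]
      symm
      apply Finset.sum_nbij' (i := fun x : ℕ × ℕ => x.1 * x.2)
        (j := fun d => (Nat.gcd d m, Nat.gcd d n))
      · rintro ⟨d1, d2⟩ hx
        simp only [mem_product, Nat.mem_divisors] at hx ⊢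
        exact ⟨mul_dvd_mul hx.1.1 hx.2.1, by positivity⟩
      · intro d hd
        rw [Nat.mem_divisors] at hd
        simp only [mem_product, Nat.mem_divisors]
        exact ⟨⟨Nat.gcd_dvd_right _ _, hm.ne'⟩, ⟨Nat.gcd_dvd_right _ _, hn.ne'⟩⟩
      · rintro ⟨d1, d2⟩ hx
        simp only [mem_product, Nat.mem_divisors] at hx
        have c2 : Nat.Coprime d2 m := (cop.symm.coprime_dvd_left hx.2.1)
        have c3 : Nat.Coprime d1 n := (cop.coprime_dvd_left hx.1.1)
        simp only [Prod.mk.injEq]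
        constructor
        · rw [Nat.Coprime.gcd_mul_right_cancel _ c2, Nat.gcd_eq_left hx.1.1]
        · rw [Nat.Coprime.gcd_mul_left_cancel _ c3, Nat.gcd_eq_left hx.2.1]
      · intro d hd
        rw [Nat.mem_divisors] at hd
        dsimp only
        rw [← Nat.Coprime.gcd_mul _ cop, Nat.gcd_eq_left hd.1]
      · rintro ⟨d1, d2⟩ hx
        simp only [mem_product, Nat.mem_divisors] at hx
        obtain ⟨⟨hd1, -⟩, hd2, -⟩ := hx
        simp only [hF]
        rw [← Nat.div_mul_div_comm hd1 hd2,
          gcd_split cop hd1 (Nat.div_dvd_of_dvd hd1) hd2 (Nat.div_dvd_of_dvd hd2),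
          rho_mul ((cop.coprime_dvd_left ((Nat.gcd_dvd_left _ _).trans hd1)).coprime_dvd_right
            ((Nat.gcd_dvd_left _ _).trans hd2)), mul_one]
    -- the product of the two small sums
    set G : ℕ × ℕ → ℂ := fun x =>
      rho (Lfull k) (Nat.gcd x.1 (m / x.1)) * rho (Lfull k) (Nat.gcd x.2 (n / x.2))
        * (μ x.1 * μ x.2) with hG
    have hBtrans : (sconv (Lfull k) μ (fun _ => 1) m) * (sconv (Lfull k) μ (fun _ => 1) n)
        = ∑ x ∈ m.divisors ×ˢ n.divisors, G x := by
      rw [sconv, sconv, Finset.sum_mul_sum]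
      rw [Finset.sum_product]
      refine Finset.sum_congr rfl fun d1 _ => Finset.sum_congr rfl fun d2 _ => by
        simp only [hG]; ring
    have hsub : ∑ x ∈ m.divisors ×ˢ n.divisors, (F x - G x) = 0 := by
      rw [Finset.sum_sub_distrib, ← hAtrans, ← hBtrans, hA, hBm, hBn, mul_zero, sub_zero]
    have hsingle : F (m, n) - G (m, n) = 0 := by
      rw [← hsub]
      symm
      apply Finset.sum_eq_single_of_mem
      · simp only [mem_product, Nat.mem_divisors]
        exact ⟨⟨dvd_refl m, hm.ne'⟩, dvd_refl n, hn.ne'⟩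
      · rintro ⟨d1, d2⟩ hx hne
        simp only [mem_product, Nat.mem_divisors] at hx
        obtain ⟨⟨hd1, -⟩, hd2, -⟩ := hx
        have hlt : d1 * d2 < N := by
          rw [← hN]
          have h1' : d1 ≤ m := Nat.le_of_dvd hm hd1
          have h2' : d2 ≤ n := Nat.le_of_dvd hn hd2
          rcases h1'.lt_or_eq with h | rfl
          · calc d1 * d2 ≤ d1 * n := Nat.mul_le_mul_left d1 h2'
              _ < m * n := (Nat.mul_lt_mul_right hn).mpr h
          · rcases h2'.lt_or_eq with h | rfl
            · exact (Nat.mul_lt_mul_left hm).mpr h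
            · exact absurd rfl hne
        have := ih (d1 * d2) hlt d1 d2 rfl
          ((cop.coprime_dvd_left hd1).coprime_dvd_right hd2)
        simp only [hF, hG]
        rw [this]
        ring
    have hFmn : F (m, n) = μ (m * n) := by
      simp only [hF]
      rw [Nat.div_self hm, Nat.div_self hn, Nat.gcd_one_right, Nat.gcd_one_right,
        rho_one, one_mul, one_mul]
    have hGmn : G (m, n) = μ m * μ n := by
      simp only [hG]
      rw [Nat.div_self hm, Nat.div_self hn, Nat.gcd_one_right, Nat.gcd_one_right,
        rho_one, one_mul, one_mul]
    rw [hFmn, hGmn] at hsingle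
    linear_combination hsingle
end


theorem kfull_moebius_props (k : ℕ) (hk : 1 ≤ k) (μ : ℕ → ℂ)
    (hμ : ∀ n : ℕ, 0 < n →
      sconv (Lfull k) μ (fun _ => 1) n = if n = 1 then 1 else 0) :
    IsMult μ ∧ ∀ p : ℕ, p.Prime →
      (∀ a : ℕ, 1 ≤ a → a < 2 * k → μ (p ^ a) = -1) ∧
      (∀ a : ℕ, 2 * k ≤ a → μ (p ^ a) = μ (p ^ (a - 1)) - μ (p ^ (a - k))) := by
  refine ⟨⟨mu_one k hk μ hμ, fun m n cop => mu_mult_aux k hk μ hμ (m * n) m n rfl cop⟩,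
    fun p hp => ⟨fun a ha1 ha2 => part1 k hk μ hμ hp ha1 ha2,
      fun a ha => part2 k hk μ hμ hp ha⟩⟩
end

section
/- For any S ⊆ ℕ⁺ and completely multiplicative arithmetic functions f, g, for every positive integer n: (f *_S g)(n) = Σ_{d² | n} μ_S(d) f(d) g(d) (f * g)(n/d²), where * is the Dirichlet convolution and μ_S is defined by Σ_{d|n} μ_S(d) = ρ_S(n). -/
open Finset
open scoped Classical

/-- The Möbius function of the set `S`. -/
noncomputable def muS (S : Set ℕ) (n : ℕ) : ℂ :=
  ∑ d ∈ n.divisors, rho S d * (ArithmeticFunction.moebius (n / d) : ℂ)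

/-- The Dirichlet convolution. -/
noncomputable def dconv (f g : ℕ → ℂ) (n : ℕ) : ℂ :=
  ∑ d ∈ n.divisors, f d * g (n / d)

/-- A completely multiplicative arithmetic function. -/
def IsCompMult (f : ℕ → ℂ) : Prop :=
  f 1 = 1 ∧ ∀ m n : ℕ, f (m * n) = f m * f n

/-!
Write `ρ_S(gcd(d, n/d)) = ∑_{e ∣ gcd(d, n/d)} μ_S(e)` and swap the two sums. The pairs `(d, e)`
with `d ∣ n` and `e ∣ gcd(d, n/d)` are exactly the pairs `(e·a, e)` with `e² ∣ n` and `a ∣ n/e²`,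
and complete multiplicativity splits `f(e·a) g(n/(e·a))` as `f(e) g(e) · f(a) g(n/e²/a)`.
-/

theorem sum_divisors_muS (S : Set ℕ) {m : ℕ} (hm : m ≠ 0) :
    ∑ e ∈ m.divisors, muS S e = rho S m := by
  refine ArithmeticFunction.sum_eq_iff_sum_mul_moebius_eq.mpr (fun k _ => ?_) m
    (Nat.pos_of_ne_zero hm)
  rw [muS, Nat.sum_divisorsAntidiagonal' fun a b => (ArithmeticFunction.moebius a : ℂ) * rho S b]
  exact sum_congr rfl fun _ _ => mul_comm _ _

theorem Nat.dvd_gcd_div_iff {n d e : ℕ} (hd : d ∣ n) : e ∣ d.gcd (n / d) ↔ e ∣ d ∧ d * e ∣ n := by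
  rw [Nat.dvd_gcd_iff, Nat.dvd_div_iff_mul_dvd hd]

theorem sum_divisors_sum_divisors_gcd_div {M : Type*} [AddCommMonoid M] (n : ℕ) (F : ℕ → ℕ → M) :
    ∑ d ∈ n.divisors, ∑ e ∈ (d.gcd (n / d)).divisors, F d e =
      ∑ e ∈ n.divisors with e ^ 2 ∣ n, ∑ a ∈ (n / e ^ 2).divisors, F (e * a) e := by
  rw [sum_comm' (t' := n.divisors.filter (· ^ 2 ∣ n))
    (s' := fun e => (n / e ^ 2).divisors.image (e * ·))]
  · refine sum_congr rfl fun e he => sum_image fun a _ b _ hab => ?_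
    exact Nat.eq_of_mul_eq_mul_left (Nat.pos_of_mem_divisors (mem_filter.mp he).1) hab
  · intro d e
    simp only [mem_filter, Nat.mem_divisors, mem_image]
    constructor
    · rintro ⟨⟨hdn, hn⟩, hed, -⟩
      obtain ⟨⟨a, rfl⟩, hn'⟩ := (Nat.dvd_gcd_div_iff hdn).mp hed
      have hean : e ^ 2 * a ∣ n := by rwa [mul_right_comm, ← sq] at hn'
      have he2 : e ^ 2 ∣ n := dvd_of_mul_right_dvd hean
      refine ⟨⟨a, ⟨(Nat.dvd_div_iff_mul_dvd he2).mpr hean, ?_⟩, rfl⟩,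
        ⟨dvd_of_mul_right_dvd hdn, hn⟩, he2⟩
      exact (Nat.div_ne_zero_iff_of_dvd he2).mpr ⟨hn, ne_zero_of_dvd_ne_zero hn he2⟩
    · rintro ⟨⟨a, ⟨han, -⟩, rfl⟩, ⟨-, hn⟩, he2⟩
      have hean : e * a * e ∣ n := by
        rw [mul_right_comm, ← sq]; exact (Nat.dvd_div_iff_mul_dvd he2).mp han
      have hd : e * a ∣ n := dvd_of_mul_right_dvd hean
      refine ⟨⟨hd, hn⟩, (Nat.dvd_gcd_div_iff hd).mpr ⟨dvd_mul_right e a, hean⟩, ?_⟩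
      exact Nat.gcd_ne_zero_left (ne_zero_of_dvd_ne_zero hn hd)

theorem Nat.div_mul_eq_mul_div_sq_div {n e a : ℕ} (he : e ^ 2 ∣ n) (ha : a ∣ n / e ^ 2) :
    n / (e * a) = e * (n / e ^ 2 / a) := by
  rcases Nat.eq_zero_or_pos (e * a) with h | h
  · rcases Nat.mul_eq_zero.mp h with rfl | rfl <;> simp
  obtain ⟨c, hc⟩ := (Nat.dvd_div_iff_mul_dvd he).mp ha
  have h2 : 0 < e ^ 2 * a := by rw [sq, mul_assoc]; exact Nat.mul_pos (Nat.pos_of_mul_pos_right h) h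
  rw [Nat.div_div_eq_div_mul, Nat.div_eq_of_eq_mul_left h2 (show n = c * _ by rw [hc]; ring)]
  exact Nat.div_eq_of_eq_mul_left h (show n = e * c * _ by rw [hc]; ring)

theorem sconv_eq_dirichlet_sum_general (S : Set ℕ) (f g : ℕ → ℂ)
    (hf : IsCompMult f) (hg : IsCompMult g) (n : ℕ) :
    sconv S f g n =
      ∑ d ∈ n.divisors.filter (fun d => d ^ 2 ∣ n),
        muS S d * f d * g d * dconv f g (n / d ^ 2) := by
  calc sconv S f g n
      = ∑ d ∈ n.divisors, ∑ e ∈ (d.gcd (n / d)).divisors, muS S e * (f d * g (n / d)) := by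
        rw [sconv]
        refine sum_congr rfl fun d hd => ?_
        rw [← sum_mul, sum_divisors_muS S (Nat.gcd_ne_zero_left (Nat.pos_of_mem_divisors hd).ne'),
          mul_assoc]
    _ = ∑ e ∈ n.divisors with e ^ 2 ∣ n,
          ∑ a ∈ (n / e ^ 2).divisors, muS S e * (f (e * a) * g (n / (e * a))) :=
        sum_divisors_sum_divisors_gcd_div n _
    _ = _ := by
        refine sum_congr rfl fun e he => ?_
        rw [dconv, mul_sum]
        refine sum_congr rfl fun a ha => ?_
        rw [Nat.div_mul_eq_mul_div_sq_div (mem_filter.mp he).2 (Nat.dvd_of_mem_divisors ha),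
          hf.2, hg.2]
        ring

theorem sconv_eq_dirichlet_sum (S : Set ℕ) (f g : ℕ → ℂ)
    (hf : IsCompMult f) (hg : IsCompMult g) (n : ℕ) (hn : 0 < n) :
    sconv S f g n =
      ∑ d ∈ n.divisors.filter (fun d => d ^ 2 ∣ n),
        muS S d * f d * g d * dconv f g (n / d ^ 2) :=
  sconv_eq_dirichlet_sum_general S f g hf hg n
end

section
/- For any S ⊆ ℕ⁺ and completely multiplicative arithmetic functions f, g, for every positive integer n: (f *_S g)(n) = Σ_{d² | n} ρ_S(d) f(d) g(d) (f × g)(n/d²), where (f × g)(m) = Σ_{ab = m, gcd(a,b) = 1} f(a) g(b) is the unitary convolution. -/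
open Finset
open scoped Classical

/-- The unitary convolution. -/
noncomputable def uconv (f g : ℕ → ℂ) (n : ℕ) : ℂ :=
  ∑ d ∈ n.divisors.filter (fun d => Nat.gcd d (n / d) = 1), f d * g (n / d)

lemma div_aux {k a : ℕ} (b : ℕ) (hk : 0 < k) (ha : 0 < a) :
    (k ^ 2 * (a * b)) / (k * a) = k * b := by
  have h : k ^ 2 * (a * b) = (k * a) * (k * b) := by ring
  rw [h, Nat.mul_div_cancel_left _ (Nat.mul_pos hk ha)]

theorem sconv_eq_unitary_sum (S : Set ℕ) (f g : ℕ → ℂ)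
    (hf : IsCompMult f) (hg : IsCompMult g) (n : ℕ) (hn : 0 < n) :
    sconv S f g n =
      ∑ d ∈ n.divisors.filter (fun d => d ^ 2 ∣ n),
        rho S d * f d * g d * uconv f g (n / d ^ 2) := by
  classical
  have hn0 : n ≠ 0 := hn.ne'
  rw [sconv]
  simp only [uconv, Finset.mul_sum]
  rw [Finset.sum_sigma']
  refine Finset.sum_bij' (fun d _ => (⟨Nat.gcd d (n / d), d / Nat.gcd d (n / d)⟩ : Σ _ : ℕ, ℕ))
    (fun p _ => p.1 * p.2) ?_ ?_ ?_ ?_ ?_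
  · intro d hd
    obtain ⟨hdn, _⟩ := Nat.mem_divisors.mp hd
    have hd0 : 0 < d := Nat.pos_of_mem_divisors hd
    set k := Nat.gcd d (n / d) with hk
    have hk0 : 0 < k := Nat.gcd_pos_of_pos_left _ hd0
    have hka : k ∣ d := Nat.gcd_dvd_left _ _
    have hkb : k ∣ n / d := Nat.gcd_dvd_right _ _
    set a := d / k with hadef
    set b := (n / d) / k with hbdef
    have hda : d = k * a := (Nat.mul_div_cancel' hka).symm
    have hdb : n / d = k * b := (Nat.mul_div_cancel' hkb).symm
    have h1 : n = d * (n / d) := (Nat.mul_div_cancel' hdn).symm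
    rw [hdb] at h1
    rw [hda] at h1
    have hneq : n = k ^ 2 * (a * b) := by rw [h1]; ring
    have hcop : Nat.gcd a b = 1 := Nat.coprime_div_gcd_div_gcd hk0
    have ha0 : 0 < a := Nat.div_pos (Nat.le_of_dvd hd0 hka) hk0
    have hm : n / k ^ 2 = a * b := by
      rw [hneq, Nat.mul_div_cancel_left _ (by positivity : 0 < k ^ 2)]
    simp only [Finset.mem_sigma, Finset.mem_filter, Nat.mem_divisors]
    refine ⟨⟨⟨dvd_trans hka hdn, hn0⟩, ⟨a * b, hneq⟩⟩, ⟨⟨?_, ?_⟩, ?_⟩⟩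
    · rw [hm]; exact Dvd.intro _ rfl
    · rw [hm]; intro h; exact hn0 (by rw [hneq, h, mul_zero])
    · rw [hm, Nat.mul_div_cancel_left _ ha0]; exact hcop
  · rintro ⟨k, a⟩ hp
    simp only [Finset.mem_sigma, Finset.mem_filter, Nat.mem_divisors] at hp
    obtain ⟨⟨⟨hkn, _⟩, hk2⟩, ⟨ham, hm0⟩, _⟩ := hp
    obtain ⟨b, hb⟩ := ham
    have hnk : k ^ 2 * (a * b) = n := by rw [← hb]; exact Nat.mul_div_cancel' hk2
    exact Nat.mem_divisors.mpr ⟨⟨k * b, by show n = (k * a) * (k * b); rw [← hnk]; ring⟩, hn0⟩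
  · intro d hd
    exact Nat.mul_div_cancel' (Nat.gcd_dvd_left _ _)
  · rintro ⟨k, a⟩ hp
    simp only [Finset.mem_sigma, Finset.mem_filter, Nat.mem_divisors] at hp
    obtain ⟨⟨⟨hkn, _⟩, hk2⟩, ⟨ham, hm0⟩, hcop⟩ := hp
    have hk0 : 0 < k := Nat.pos_of_ne_zero (fun h => hn0 (by simpa [h] using hkn))
    have ha0 : 0 < a := Nat.pos_of_ne_zero (fun h => hm0 (by simpa [h] using ham))
    set b := (n / k ^ 2) / a with hbdef
    have hb : n / k ^ 2 = a * b := (Nat.mul_div_cancel' ham).symm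
    have hnk : n = k ^ 2 * (a * b) := by rw [← hb]; exact (Nat.mul_div_cancel' hk2).symm
    have hdiv : n / (k * a) = k * b := by rw [hnk]; exact div_aux b hk0 ha0
    have hgcd : Nat.gcd (k * a) (n / (k * a)) = k := by
      rw [hdiv, Nat.gcd_mul_left, hcop, mul_one]
    simp only [hgcd, Nat.mul_div_cancel_left _ hk0]
  · intro d hd
    obtain ⟨hdn, _⟩ := Nat.mem_divisors.mp hd
    have hd0 : 0 < d := Nat.pos_of_mem_divisors hd
    set k := Nat.gcd d (n / d) with hk
    have hk0 : 0 < k := Nat.gcd_pos_of_pos_left _ hd0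
    have hka : k ∣ d := Nat.gcd_dvd_left _ _
    have hkb : k ∣ n / d := Nat.gcd_dvd_right _ _
    set a := d / k with hadef
    set b := (n / d) / k with hbdef
    have hda : d = k * a := (Nat.mul_div_cancel' hka).symm
    have hdb : n / d = k * b := (Nat.mul_div_cancel' hkb).symm
    have h1 : n = d * (n / d) := (Nat.mul_div_cancel' hdn).symm
    rw [hdb] at h1
    rw [hda] at h1
    have hneq : n = k ^ 2 * (a * b) := by rw [h1]; ring
    have ha0 : 0 < a := Nat.div_pos (Nat.le_of_dvd hd0 hka) hk0
    have hm : n / k ^ 2 = a * b := by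
      rw [hneq, Nat.mul_div_cancel_left _ (by positivity : 0 < k ^ 2)]
    have hmb : (n / k ^ 2) / a = b := by rw [hm, Nat.mul_div_cancel_left _ ha0]
    simp only [hmb]
    calc rho S k * f d * g (n / d)
        = rho S k * f (k * a) * g (k * b) := by rw [← hda, ← hdb]
      _ = rho S k * (f k * f a) * (g k * g b) := by rw [hf.2, hg.2]
      _ = rho S k * f k * g k * (f a * g b) := by ring
end

section
/- For any S ⊆ ℕ⁺ and every positive integer n, the number of S-divisors satisfies τ_S(n) = Σ_{d² | n} μ_S(d) τ(n/d²) = Σ_{d² | n} ρ_S(d) τ*(n/d²), where τ is the number-of-divisors function and τ*(m) is the number of unitary divisors of m (divisors d of m with gcd(d, m/d) = 1). -/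
/-!
Grouping the divisors `e` of `n` by `d = gcd(e, n/e)` gives `τ_S(n) = ∑_{d² ∣ n} ρ_S(d) τ*(n/d²)`,
because the divisors with `gcd(e, n/e) = d` are `d` times the unitary divisors of `n/d²`.
For the square convolution `(f ⋆ g)(n) = ∑_{d² ∣ n} f(d) g(n/d²)` one has
`(f * g) ⋆ h = f ⋆ (g ⋆ h)` for the Dirichlet product `*`. The case `S = ℕ` reads `τ = 1 ⋆ τ*`,
so `μ ⋆ τ = (μ * 1) ⋆ τ* = τ*`, and then `μ_S ⋆ τ = (ρ_S * μ) ⋆ τ = ρ_S ⋆ τ* = τ_S`.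
-/

open Finset
open scoped Classical

/-- Characteristic function of `S` (integer-valued). -/
noncomputable def rhoZ (S : Set ℕ) (n : ℕ) : ℤ :=
  if n ∈ S then 1 else 0

/-- The Möbius function of the set `S`. -/
noncomputable def muSZ (S : Set ℕ) (n : ℕ) : ℤ :=
  ∑ d ∈ n.divisors, rhoZ S d * ArithmeticFunction.moebius (n / d)

/-- The number of `S`-divisors of `n`. -/
noncomputable def tauS (S : Set ℕ) (n : ℕ) : ℕ :=
  (n.divisors.filter (fun d => Nat.gcd d (n / d) ∈ S)).card

/-- The sum of the `S`-divisors of `n`. -/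
noncomputable def sigmaS (S : Set ℕ) (n : ℕ) : ℕ :=
  ∑ d ∈ n.divisors.filter (fun d => Nat.gcd d (n / d) ∈ S), d

/-- The number of unitary divisors of `n`. -/
def tauStar (n : ℕ) : ℕ :=
  (n.divisors.filter (fun d => Nat.gcd d (n / d) = 1)).card

/-- The sum of the unitary divisors of `n`. -/
def sigmaStar (n : ℕ) : ℕ :=
  ∑ d ∈ n.divisors.filter (fun d => Nat.gcd d (n / d) = 1), d

section SquareConvolution

variable {R : Type*} [Semiring R]

def sqDivisors (n : ℕ) : Finset ℕ :=
  n.divisors.filter (fun d => d ^ 2 ∣ n)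

theorem mem_sqDivisors {d n : ℕ} : d ∈ sqDivisors n ↔ d ^ 2 ∣ n ∧ n ≠ 0 := by
  rw [sqDivisors, mem_filter, Nat.mem_divisors]
  exact ⟨fun h => ⟨h.2, h.1.2⟩,
    fun h => ⟨⟨(dvd_pow_self d two_ne_zero).trans h.1, h.2⟩, h.1⟩⟩

def sqConv (f g : ℕ → R) (n : ℕ) : R :=
  ∑ d ∈ sqDivisors n, f d * g (n / d ^ 2)

theorem sqConv_one_left (g : ℕ → R) {n : ℕ} (hn : n ≠ 0) :
    sqConv (⇑(1 : ArithmeticFunction R)) g n = g n := by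
  have h1 : 1 ∈ sqDivisors n := mem_sqDivisors.2 ⟨by simp, hn⟩
  simp [sqConv, ArithmeticFunction.one_apply, h1]

theorem mul_mem_sqDivisors_iff {c t n : ℕ} (hc : c ∈ sqDivisors n) :
    c * t ∈ sqDivisors n ↔ t ∈ sqDivisors (n / c ^ 2) := by
  obtain ⟨hc2, hn⟩ := mem_sqDivisors.1 hc
  have hnc : n / c ^ 2 ≠ 0 :=
    (Nat.div_ne_zero_iff_of_dvd hc2).2 ⟨hn, pow_ne_zero 2 (by rintro rfl; simp_all)⟩
  rw [mem_sqDivisors, mem_sqDivisors, Nat.dvd_div_iff_mul_dvd hc2, mul_pow]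
  tauto

theorem sqConv_dirichlet (f g h : ℕ → R) (n : ℕ) :
    sqConv (fun d => ∑ c ∈ d.divisors, f c * g (d / c)) h n = sqConv f (sqConv g h) n := by
  simp only [sqConv, Finset.sum_mul, Finset.mul_sum]
  rw [Finset.sum_comm' (s' := fun c => (sqDivisors n).filter (c ∣ ·)) (t' := sqDivisors n)]
  · refine Finset.sum_congr rfl fun c hc => ?_
    have hc0 : 0 < c := Nat.pos_of_mem_divisors (mem_filter.1 hc).1
    symm
    refine Finset.sum_nbij' (c * ·) (· / c) ?_ ?_ ?_ ?_ ?_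
    · intro t ht
      exact mem_filter.2 ⟨(mul_mem_sqDivisors_iff hc).2 ht, dvd_mul_right c t⟩
    · intro d hd
      obtain ⟨hd, t, rfl⟩ := mem_filter.1 hd
      rw [Nat.mul_div_cancel_left t hc0]
      exact (mul_mem_sqDivisors_iff hc).1 hd
    · intro t _
      exact Nat.mul_div_cancel_left t hc0
    · intro d hd
      exact Nat.mul_div_cancel' (mem_filter.1 hd).2
    · intro t _
      rw [Nat.mul_div_cancel_left t hc0, Nat.div_div_eq_div_mul, ← mul_pow, mul_assoc]
  · intro d c
    simp only [mem_filter, Nat.mem_divisors, mem_sqDivisors]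
    constructor
    · rintro ⟨⟨hd, hn⟩, hcd, -⟩
      exact ⟨⟨⟨hd, hn⟩, hcd⟩, (pow_dvd_pow_of_dvd hcd 2).trans hd, hn⟩
    · rintro ⟨⟨⟨hd, hn⟩, hcd⟩, -⟩
      exact ⟨⟨hd, hn⟩, hcd, by rintro rfl; simp_all⟩

end SquareConvolution

theorem gcd_mul_div_mul {d u m : ℕ} (hd : 0 < d) (hu : u ∣ m) :
    Nat.gcd (d * u) (d ^ 2 * m / (d * u)) = d * Nat.gcd u (m / u) := by
  rw [sq, mul_assoc, Nat.mul_div_mul_left _ _ hd, Nat.mul_div_assoc _ hu, Nat.gcd_mul_left]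

/-- The divisors `e` of `n = d² m` with `gcd e (n / e) = d` are the `d * u` with `u` a unitary
divisor of `m`. -/
theorem card_filter_gcd_div_eq {n d : ℕ} (hd : d ^ 2 ∣ n) :
    (n.divisors.filter (fun e => Nat.gcd e (n / e) = d)).card = tauStar (n / d ^ 2) := by
  obtain ⟨m, rfl⟩ := hd
  rcases d.eq_zero_or_pos with rfl | hd
  · simp [tauStar]
  rw [Nat.mul_div_cancel_left m (pow_pos hd 2), tauStar]
  symm
  refine Finset.card_nbij' (d * ·) (· / d) ?_ ?_ ?_ ?_
  · intro u hu
    simp only [mem_coe, mem_filter, Nat.mem_divisors] at hu ⊢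
    obtain ⟨⟨hum, hm⟩, hcop⟩ := hu
    refine ⟨⟨mul_dvd_mul (dvd_pow_self d two_ne_zero) hum, by positivity⟩, ?_⟩
    rw [gcd_mul_div_mul hd hum, hcop, mul_one]
  · intro e he
    simp only [mem_coe, mem_filter, Nat.mem_divisors] at he ⊢
    obtain ⟨⟨hen, hn⟩, hgcd⟩ := he
    obtain ⟨u, rfl⟩ : d ∣ e := hgcd ▸ Nat.gcd_dvd_left _ _
    obtain ⟨v, hv⟩ : d ∣ d ^ 2 * m / (d * u) := hgcd ▸ Nat.gcd_dvd_right _ _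
    have hm : m = u * v := by
      have := Nat.div_mul_cancel hen
      rw [hv] at this
      exact Nat.eq_of_mul_eq_mul_left (pow_pos hd 2) (by rw [← this]; ring)
    have hum : u ∣ m := ⟨v, hm⟩
    rw [Nat.mul_div_cancel_left u hd]
    refine ⟨⟨hum, by rintro rfl; simp at hn⟩, ?_⟩
    rw [gcd_mul_div_mul hd hum] at hgcd
    exact (Nat.mul_eq_left hd.ne').1 hgcd
  · intro u _
    exact Nat.mul_div_cancel_left u hd
  · intro e he
    simp only [mem_coe, mem_filter] at he
    exact Nat.mul_div_cancel' (he.2 ▸ Nat.gcd_dvd_left _ _)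

theorem sq_gcd_div_dvd {e n : ℕ} (he : e ∣ n) : Nat.gcd e (n / e) ^ 2 ∣ n := by
  conv_rhs => rw [← Nat.mul_div_cancel' he]
  exact sq (Nat.gcd e (n / e)) ▸ mul_dvd_mul (Nat.gcd_dvd_left _ _) (Nat.gcd_dvd_right _ _)

theorem tauS_eq_sqConv (S : Set ℕ) (n : ℕ) :
    (tauS S n : ℤ) = sqConv (rhoZ S) (fun m => (tauStar m : ℤ)) n := by
  have hmaps : ∀ e ∈ n.divisors, Nat.gcd e (n / e) ∈ sqDivisors n := fun e he =>
    mem_sqDivisors.2 ⟨sq_gcd_div_dvd (Nat.dvd_of_mem_divisors he), (Nat.mem_divisors.1 he).2⟩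
  calc (tauS S n : ℤ) = ∑ e ∈ n.divisors, rhoZ S (Nat.gcd e (n / e)) := by
        simp only [tauS, rhoZ, natCast_card_filter]
    _ = ∑ d ∈ sqDivisors n, ∑ e ∈ n.divisors with Nat.gcd e (n / e) = d,
          rhoZ S (Nat.gcd e (n / e)) := (sum_fiberwise_of_maps_to hmaps _).symm
    _ = sqConv (rhoZ S) (fun m => (tauStar m : ℤ)) n := by
        refine Finset.sum_congr rfl fun d hd => ?_
        rw [Finset.sum_congr rfl fun e he => congrArg (rhoZ S) (mem_filter.1 he).2, sum_const,
          card_filter_gcd_div_eq (mem_sqDivisors.1 hd).1, nsmul_eq_mul, mul_comm]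

theorem card_divisors_eq_sqConv_tauStar :
    (fun m => (m.divisors.card : ℤ)) = sqConv (fun _ => 1) (fun m => (tauStar m : ℤ)) := by
  funext m
  have hrho : rhoZ Set.univ = fun _ => 1 := funext fun _ => if_pos trivial
  simpa [tauS, hrho] using tauS_eq_sqConv Set.univ m

open scoped ArithmeticFunction.Moebius in
theorem sqConv_moebius_card_divisors_eq_tauStar :
    sqConv (⇑μ) (fun m => (m.divisors.card : ℤ)) =
      fun m => (tauStar m : ℤ) := by
  funext m
  rcases eq_or_ne m 0 with rfl | hm
  · simp [sqConv, sqDivisors, tauStar]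
  have hmoebius : (fun d => ∑ c ∈ d.divisors, μ c * 1) =
      ⇑(1 : ArithmeticFunction ℤ) := by
    funext d
    simp only [mul_one]
    rw [← ArithmeticFunction.coe_mul_zeta_apply, ArithmeticFunction.moebius_mul_coe_zeta]
  rw [card_divisors_eq_sqConv_tauStar, ← sqConv_dirichlet, hmoebius, sqConv_one_left _ hm]

theorem tauS_identities_general (S : Set ℕ) (n : ℕ) :
    ((tauS S n : ℤ) =
      ∑ d ∈ n.divisors.filter (fun d => d ^ 2 ∣ n),
        muSZ S d * (n / d ^ 2).divisors.card) ∧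
    ((tauS S n : ℤ) =
      ∑ d ∈ n.divisors.filter (fun d => d ^ 2 ∣ n),
        rhoZ S d * tauStar (n / d ^ 2)) := by
  have hunitary := tauS_eq_sqConv S n
  refine ⟨?_, hunitary⟩
  calc (tauS S n : ℤ) = sqConv (rhoZ S) (fun m => (tauStar m : ℤ)) n := hunitary
    _ = sqConv (rhoZ S)
          (sqConv (⇑ArithmeticFunction.moebius) fun m => (m.divisors.card : ℤ)) n := by
        rw [sqConv_moebius_card_divisors_eq_tauStar]
    _ = sqConv (muSZ S) (fun m => (m.divisors.card : ℤ)) n := (sqConv_dirichlet _ _ _ n).symm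

theorem tauS_identities (S : Set ℕ) (n : ℕ) (hn : 0 < n) :
    ((tauS S n : ℤ) =
      ∑ d ∈ n.divisors.filter (fun d => d ^ 2 ∣ n),
        muSZ S d * (n / d ^ 2).divisors.card) ∧
    ((tauS S n : ℤ) =
      ∑ d ∈ n.divisors.filter (fun d => d ^ 2 ∣ n),
        rhoZ S d * tauStar (n / d ^ 2)) :=
  tauS_identities_general S n
end

section
/- For any S ⊆ ℕ⁺ and every positive integer n, the sum of S-divisors satisfies σ_S(n) = Σ_{d² | n} μ_S(d) · d · σ(n/d²) = Σ_{d² | n} ρ_S(d) · d · σ*(n/d²), where σ is the sum-of-divisors function and σ*(m) = Σ_{d|m, gcd(d,m/d)=1} d is the sum of unitary divisors. -/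
open Finset
open scoped Classical

lemma key_bij (n : ℕ) (hn : 0 < n) (f : ℕ → ℕ → ℤ) :
    ∑ e ∈ n.divisors, f (Nat.gcd e (n / e)) e
      = ∑ g ∈ n.divisors.filter (fun g => g ^ 2 ∣ n),
          ∑ u ∈ (n / g ^ 2).divisors.filter
              (fun u => Nat.gcd u ((n / g ^ 2) / u) = 1), f g (g * u) := by
  have hne : n ≠ 0 := hn.ne'
  rw [Finset.sum_sigma']
  refine Finset.sum_nbij'
    (i := fun e => ⟨Nat.gcd e (n / e), e / Nat.gcd e (n / e)⟩)
    (j := fun p => p.1 * p.2) ?_ ?_ ?_ ?_ ?_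
  · intro e he
    simp only [Nat.mem_divisors] at he
    obtain ⟨hdvd, -⟩ := he
    have he0 : e ≠ 0 := fun h => hne (by simpa [h] using hdvd)
    set g := Nat.gcd e (n / e) with hg
    have hg0 : 0 < g := Nat.gcd_pos_of_pos_left _ (Nat.pos_of_ne_zero he0)
    have hge : g ∣ e := Nat.gcd_dvd_left _ _
    have hgq : g ∣ n / e := Nat.gcd_dvd_right _ _
    have hmul : e * (n / e) = n := Nat.mul_div_cancel' hdvd
    obtain ⟨a, ha⟩ := hge
    obtain ⟨b, hb⟩ := hgq
    have hae : e / g = a := by rw [ha, Nat.mul_div_cancel_left _ hg0]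
    have hbq : (n / e) / g = b := by rw [hb, Nat.mul_div_cancel_left _ hg0]
    have hfact : n = g ^ 2 * (a * b) := by rw [← hmul, hb, ha]; ring
    have hg2 : g ^ 2 ∣ n := Dvd.intro _ hfact.symm
    have hndiv : n / g ^ 2 = a * b := by
      rw [hfact, Nat.mul_div_cancel_left _ (by positivity)]
    have ha0 : 0 < a := by
      rcases Nat.eq_zero_or_pos a with h | h
      · exact absurd (by rw [ha, h, mul_zero]) he0
      · exact h
    have hquot : (n / g ^ 2) / (e / g) = (n / e) / g := by
      rw [hndiv, hae, hbq, Nat.mul_div_cancel_left _ ha0]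
    simp only [Finset.mem_sigma, Finset.mem_filter, Nat.mem_divisors]
    refine ⟨⟨⟨(Dvd.intro a ha.symm).trans hdvd, hne⟩, hg2⟩, ⟨⟨⟨b, by rw [hndiv, hae]⟩,
      (Nat.div_pos (Nat.le_of_dvd hn hg2) (by positivity)).ne'⟩, ?_⟩⟩
    · rw [hquot]; exact Nat.coprime_div_gcd_div_gcd hg0
  · rintro ⟨g, u⟩ hp
    simp only [Finset.mem_sigma, Finset.mem_filter, Nat.mem_divisors] at hp
    obtain ⟨⟨⟨hg, -⟩, hg2⟩, ⟨hu, hne2⟩, hcop⟩ := hp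
    obtain ⟨m, hm⟩ := hg2
    have hg0 : g ≠ 0 := fun h => hne (by simpa [h] using hm)
    have hm' : n / g ^ 2 = m := by rw [hm, Nat.mul_div_cancel_left _ (by positivity)]
    rw [hm'] at hu
    simp only [Nat.mem_divisors]
    refine ⟨?_, hne⟩
    calc g * u ∣ g * m := mul_dvd_mul_left g hu
      _ ∣ n := by rw [hm, pow_two, mul_assoc]; exact Dvd.intro_left g rfl
  · intro e he
    simp only [Nat.mem_divisors] at he
    exact Nat.mul_div_cancel' (Nat.gcd_dvd_left _ _)
  · rintro ⟨g, u⟩ hp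
    simp only [Finset.mem_sigma, Finset.mem_filter, Nat.mem_divisors] at hp
    obtain ⟨⟨⟨hg, -⟩, hg2⟩, ⟨hu, hne2⟩, hcop⟩ := hp
    obtain ⟨m, hm⟩ := hg2
    have hg0 : g ≠ 0 := fun h => hne (by simpa [h] using hm)
    have hm' : n / g ^ 2 = m := by rw [hm, Nat.mul_div_cancel_left _ (by positivity)]
    rw [hm'] at hu hcop hne2
    obtain ⟨v, hv⟩ := hu
    have hu0 : u ≠ 0 := by rintro rfl; exact (hne2 (by simp [hv]))
    rw [hv, Nat.mul_div_cancel_left _ (Nat.pos_of_ne_zero hu0)] at hcop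
    have hnfact : n = (g * u) * (g * v) := by rw [hm, hv]; ring
    have hdivq : n / (g * u) = g * v := by
      rw [hnfact, Nat.mul_div_cancel_left _
        (Nat.pos_of_ne_zero (mul_ne_zero hg0 hu0))]
    have hgcd : Nat.gcd (g * u) (n / (g * u)) = g := by
      rw [hdivq, Nat.gcd_mul_left, hcop, mul_one]
    simp only [hgcd, Nat.mul_div_cancel_left _ (Nat.pos_of_ne_zero hg0)]
  · intro e he
    simp only [Nat.mem_divisors] at he
    rw [Nat.mul_div_cancel' (Nat.gcd_dvd_left _ _)]

lemma pair_bij (n : ℕ) (hn : 0 < n) (h : ℕ → ℕ → ℤ) :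
    ∑ d ∈ n.divisors.filter (fun d => d ^ 2 ∣ n),
      ∑ g ∈ (n / d ^ 2).divisors.filter (fun g => g ^ 2 ∣ n / d ^ 2), h d g
    = ∑ c ∈ n.divisors.filter (fun c => c ^ 2 ∣ n), ∑ d ∈ c.divisors, h d (c / d) := by
  have hne : n ≠ 0 := hn.ne'
  rw [Finset.sum_sigma', Finset.sum_sigma']
  refine Finset.sum_nbij'
    (i := fun p => (⟨p.1 * p.2, p.1⟩ : (_ : ℕ) × ℕ))
    (j := fun q => (⟨q.2, q.1 / q.2⟩ : (_ : ℕ) × ℕ)) ?_ ?_ ?_ ?_ ?_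
  · rintro ⟨d, g⟩ hp
    simp only [Finset.mem_sigma, Finset.mem_filter, Nat.mem_divisors] at hp ⊢
    obtain ⟨⟨⟨hd, -⟩, hd2⟩, ⟨hg, hgne⟩, hg2⟩ := hp
    have hc2 : (d * g) ^ 2 ∣ n := by
      rw [mul_pow, ← Nat.mul_div_cancel' hd2]
      exact mul_dvd_mul_left _ hg2
    have hd0 : d ≠ 0 := fun h0 => hne (by simpa [h0] using hd)
    have hg0 : g ≠ 0 := fun h0 => hgne (by simpa [h0] using hg)
    exact ⟨⟨⟨(dvd_pow_self _ two_ne_zero).trans hc2, hne⟩, hc2⟩,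
      dvd_mul_right d g, mul_ne_zero hd0 hg0⟩
  · rintro ⟨c, d⟩ hq
    simp only [Finset.mem_sigma, Finset.mem_filter, Nat.mem_divisors] at hq ⊢
    obtain ⟨⟨⟨hc, -⟩, hc2⟩, hd, hc0⟩ := hq
    have hd2 : d ^ 2 ∣ n := (pow_dvd_pow_of_dvd hd 2).trans hc2
    have hg2 : (c / d) ^ 2 ∣ n / d ^ 2 := by
      rw [Nat.dvd_div_iff_mul_dvd hd2, ← mul_pow, Nat.mul_div_cancel' hd]
      exact hc2
    have hd0 : d ≠ 0 := fun h0 => hc0 (by simpa [h0] using hd)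
    exact ⟨⟨⟨hd.trans hc, hne⟩, hd2⟩, ⟨(dvd_pow_self _ two_ne_zero).trans hg2,
      (Nat.div_pos (Nat.le_of_dvd hn hd2) (by positivity)).ne'⟩, hg2⟩
  · rintro ⟨d, g⟩ hp
    simp only [Finset.mem_sigma, Finset.mem_filter, Nat.mem_divisors] at hp
    obtain ⟨⟨⟨hd, -⟩, hd2⟩, ⟨hg, hgne⟩, hg2⟩ := hp
    have hd0 : d ≠ 0 := fun h0 => hne (by simpa [h0] using hd)
    simp [Nat.mul_div_cancel_left _ (Nat.pos_of_ne_zero hd0)]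
  · rintro ⟨c, d⟩ hq
    simp only [Finset.mem_sigma, Finset.mem_filter, Nat.mem_divisors] at hq
    obtain ⟨⟨⟨hc, -⟩, hc2⟩, hd, hc0⟩ := hq
    simp [Nat.mul_div_cancel' hd]
  · rintro ⟨d, g⟩ hp
    simp only [Finset.mem_sigma, Finset.mem_filter, Nat.mem_divisors] at hp
    obtain ⟨⟨⟨hd, -⟩, hd2⟩, ⟨hg, hgne⟩, hg2⟩ := hp
    have hd0 : d ≠ 0 := fun h0 => hne (by simpa [h0] using hd)
    simp [Nat.mul_div_cancel_left _ (Nat.pos_of_ne_zero hd0)]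

lemma sum_muSZ (S : Set ℕ) : ∀ c > 0, ∑ d ∈ c.divisors, muSZ S d = rhoZ S c := by
  rw [ArithmeticFunction.sum_eq_iff_sum_smul_moebius_eq]
  intro n hn
  rw [Nat.sum_divisorsAntidiagonal' (f := fun d e => (ArithmeticFunction.moebius d : ℤ) • rhoZ S e), muSZ]
  exact Finset.sum_congr rfl fun d _ => by rw [smul_eq_mul, mul_comm]

lemma sigmaStar_cast (m : ℕ) : (sigmaStar m : ℤ)
    = ∑ u ∈ m.divisors.filter (fun u => Nat.gcd u (m / u) = 1), (u : ℤ) := by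
  rw [sigmaStar]; push_cast; rfl

/-- Part 2 in general form. -/
lemma part2_s14 (S : Set ℕ) (n : ℕ) (hn : 0 < n) :
    ((sigmaS S n : ℤ) =
      ∑ d ∈ n.divisors.filter (fun d => d ^ 2 ∣ n),
        rhoZ S d * d * sigmaStar (n / d ^ 2)) := by
  have h1 : (sigmaS S n : ℤ) = ∑ e ∈ n.divisors, rhoZ S (Nat.gcd e (n / e)) * e := by
    rw [sigmaS]
    push_cast
    rw [Finset.sum_filter]
    refine Finset.sum_congr rfl fun e _ => ?_
    rw [rhoZ]; split <;> simp
  rw [h1, key_bij n hn (fun g e => rhoZ S g * e)]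
  refine Finset.sum_congr rfl fun g _ => ?_
  rw [sigmaStar_cast, Finset.mul_sum]
  refine Finset.sum_congr rfl fun u _ => ?_
  push_cast
  ring

/-- Sum of divisors in terms of sums of unitary divisors. -/
lemma sigma_eq (m : ℕ) (hm : 0 < m) :
    (∑ e ∈ m.divisors, (e : ℤ)) =
      ∑ g ∈ m.divisors.filter (fun g => g ^ 2 ∣ m),
        (g : ℤ) * sigmaStar (m / g ^ 2) := by
  rw [key_bij m hm (fun g e => (e : ℤ))]
  refine Finset.sum_congr rfl fun g _ => ?_
  rw [sigmaStar_cast, Finset.mul_sum]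
  refine Finset.sum_congr rfl fun u _ => ?_
  push_cast
  ring

theorem sigmaS_identities (S : Set ℕ) (n : ℕ) (hn : 0 < n) :
    ((sigmaS S n : ℤ) =
      ∑ d ∈ n.divisors.filter (fun d => d ^ 2 ∣ n),
        muSZ S d * d * (∑ e ∈ (n / d ^ 2).divisors, (e : ℤ))) ∧
    ((sigmaS S n : ℤ) =
      ∑ d ∈ n.divisors.filter (fun d => d ^ 2 ∣ n),
        rhoZ S d * d * sigmaStar (n / d ^ 2)) := by
  refine ⟨?_, part2_s14 S n hn⟩
  have step1 : ∀ d ∈ n.divisors.filter (fun d => d ^ 2 ∣ n),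
      muSZ S d * d * (∑ e ∈ (n / d ^ 2).divisors, (e : ℤ))
      = ∑ g ∈ (n / d ^ 2).divisors.filter (fun g => g ^ 2 ∣ n / d ^ 2),
          muSZ S d * d * ((g : ℤ) * sigmaStar (n / d ^ 2 / g ^ 2)) := by
    intro d hd
    simp only [Finset.mem_filter, Nat.mem_divisors] at hd
    have hm : 0 < n / d ^ 2 := Nat.div_pos (Nat.le_of_dvd hn hd.2) (by
      have : d ≠ 0 := fun h0 => hd.1.2 (by simpa [h0] using hd.2)
      positivity)
    rw [sigma_eq _ hm, Finset.mul_sum]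
  rw [Finset.sum_congr rfl step1,
    pair_bij n hn (fun d g => muSZ S d * d * ((g : ℤ) * sigmaStar (n / d ^ 2 / g ^ 2)))]
  rw [part2_s14 S n hn]
  refine Finset.sum_congr rfl fun c hc => ?_
  simp only [Finset.mem_filter, Nat.mem_divisors] at hc
  obtain ⟨⟨hcn, hne⟩, hc2⟩ := hc
  have hc0 : 0 < c := Nat.pos_of_ne_zero fun h0 => hne (by simpa [h0] using hcn)
  have inner : ∀ d ∈ c.divisors,
      muSZ S d * d * ((c / d : ℕ) * (sigmaStar (n / d ^ 2 / (c / d) ^ 2) : ℤ))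
      = muSZ S d * (c * sigmaStar (n / c ^ 2)) := by
    intro d hd
    simp only [Nat.mem_divisors] at hd
    have hdc : d ∣ c := hd.1
    have hmul : d * (c / d) = c := Nat.mul_div_cancel' hdc
    have hdivs : n / d ^ 2 / (c / d) ^ 2 = n / c ^ 2 := by
      rw [Nat.div_div_eq_div_mul, ← mul_pow, hmul]
    have hcast : (d : ℤ) * ((c / d : ℕ) : ℤ) = (c : ℤ) := by
      rw [← Nat.cast_mul, hmul]
    rw [hdivs, mul_assoc, ← mul_assoc (d : ℤ), hcast]
  rw [Finset.sum_congr rfl inner, ← Finset.sum_mul, sum_muSZ S c hc0]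
  ring
end

section
/- Let S be a multiplicative set, p a prime, and suppose there exists s ≥ 1 such that p^j ∈ S for all 1 ≤ j < s and p^s ∉ S (s = s(p) minimal with p^s ∉ S). Then for every a ≥ 2s, σ_S(p^a) / p^a ≤ 1 + 1/p + 1/p² + ... + 1/p^{2s-1}, with equality when a = 2s - 1; moreover for a < 2s, σ_S(p^a) = σ(p^a) = 1 + p + ... + p^a. -/
open Finset
open scoped Classical

lemma sigmaS_primePow_aux (S : Set ℕ) {p : ℕ} (hp : p.Prime) (a : ℕ) :
    sigmaS S (p ^ a) =
      ∑ i ∈ Finset.range (a + 1), if p ^ min i (a - i) ∈ S then p ^ i else 0 := by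
  rw [sigmaS, Finset.sum_filter, Nat.sum_divisors_prime_pow hp]
  refine Finset.sum_congr rfl fun i hi => ?_
  have hi' : i ≤ a := Nat.lt_succ_iff.mp (Finset.mem_range.mp hi)
  have : Nat.gcd (p ^ i) (p ^ a / p ^ i) = p ^ min i (a - i) := by
    rw [Nat.pow_div hi' hp.pos]
    rcases le_total i (a - i) with h | h
    · rw [min_eq_left h, Nat.gcd_eq_left (pow_dvd_pow p h)]
    · rw [min_eq_right h, Nat.gcd_eq_right (pow_dvd_pow p h)]
  rw [this]

lemma sum_pow_le_aux (q : ℝ) (hq : 2 ≤ q) (n : ℕ) : ∑ i ∈ Finset.range n, q ^ i ≤ q ^ n := by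
  induction n with
  | zero => simp
  | succ n ih =>
    rw [Finset.sum_range_succ, pow_succ]
    nlinarith [pow_nonneg (by linarith : (0:ℝ) ≤ q) n]

lemma key_ineq_aux (q : ℝ) (hq : 2 ≤ q) (s t : ℕ) (hs : 1 ≤ s) :
    ∑ i ∈ Finset.range (2*s+t+1), q ^ i ≤ q ^ (s+t) + ∑ j ∈ Finset.range (2*s), q ^ (j + t + 1) := by
  have hsplit : ∑ i ∈ Finset.range (2*s+t+1), q ^ i
      = ∑ i ∈ Finset.range (t+1), q ^ i + ∑ j ∈ Finset.range (2*s), q ^ (j + t + 1) := by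
    calc ∑ i ∈ Finset.range (2*s+t+1), q ^ i
        = ∑ i ∈ Finset.Ico 0 (t+1), q ^ i + ∑ i ∈ Finset.Ico (t+1) (2*s+t+1), q ^ i := by
          rw [Finset.range_eq_Ico,
            Finset.sum_Ico_consecutive (fun i => q ^ i) (Nat.zero_le (t+1)) (by omega)]
      _ = ∑ i ∈ Finset.range (t+1), q ^ i + ∑ j ∈ Finset.range (2*s), q ^ (j + t + 1) := by
          rw [← Finset.range_eq_Ico, Finset.sum_Ico_eq_sum_range,
            (by omega : 2*s+t+1 - (t+1) = 2*s)]
          exact congrArg _ (Finset.sum_congr rfl fun j _ => by ring_nf)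
  rw [hsplit]
  have h1 : ∑ i ∈ Finset.range (t+1), q ^ i ≤ q ^ (t+1) := sum_pow_le_aux q hq _
  have h2 : q ^ (t+1) ≤ q ^ (s+t) := pow_le_pow_right₀ (by linarith) (by omega)
  linarith

theorem sigmaS_primePow_bounds (S : Set ℕ) (hS1 : 1 ∈ S)
    (hSmul : ∀ m n : ℕ, Nat.Coprime m n → rhoZ S (m * n) = rhoZ S m * rhoZ S n)
    (p : ℕ) (hp : p.Prime) (s : ℕ) (hs : 1 ≤ s)
    (hlow : ∀ j : ℕ, 1 ≤ j → j < s → p ^ j ∈ S) (hnot : p ^ s ∉ S) :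
    (∀ a : ℕ, 2 * s ≤ a →
      (sigmaS S (p ^ a) : ℝ) / (p : ℝ) ^ a ≤
        ∑ i ∈ Finset.range (2 * s), ((p : ℝ) ^ i)⁻¹) ∧
    ((sigmaS S (p ^ (2 * s - 1)) : ℝ) / (p : ℝ) ^ (2 * s - 1) =
        ∑ i ∈ Finset.range (2 * s), ((p : ℝ) ^ i)⁻¹) ∧
    (∀ a : ℕ, a < 2 * s → sigmaS S (p ^ a) = ∑ d ∈ (p ^ a).divisors, d) := by
  set q : ℝ := (p : ℝ) with hqdef
  have hq2 : (2:ℝ) ≤ q := by rw [hqdef]; exact_mod_cast hp.two_le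
  have hq0 : (0:ℝ) < q := by linarith
  have hqne : q ≠ 0 := ne_of_gt hq0
  -- Part 3
  have part3 : ∀ a : ℕ, a < 2 * s → sigmaS S (p ^ a) = ∑ d ∈ (p ^ a).divisors, d := by
    intro a ha
    rw [sigmaS_primePow_aux S hp a, Nat.sum_divisors_prime_pow hp]
    refine Finset.sum_congr rfl fun i hi => ?_
    have hi' : i ≤ a := Nat.lt_succ_iff.mp (Finset.mem_range.mp hi)
    have hmin : min i (a - i) < s := by omega
    rcases Nat.eq_zero_or_pos (min i (a - i)) with h0 | h0
    · rw [h0, if_pos (by simpa using hS1)]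
    · rw [if_pos (hlow _ h0 hmin)]
  refine ⟨?_, ?_, part3⟩
  · -- Part 1: upper bound for a ≥ 2s
    intro a ha
    obtain ⟨t, rfl⟩ : ∃ t, a = 2 * s + t := ⟨a - 2 * s, by omega⟩
    set a := 2 * s + t with hadef
    -- natural-number bound: sigmaS + p^(a-s) ≤ ∑_{i<a+1} p^i
    have hnat : sigmaS S (p ^ a) + p ^ (a - s) ≤ ∑ i ∈ Finset.range (a + 1), p ^ i := by
      rw [sigmaS_primePow_aux S hp a, ← Finset.sum_filter]
      have hmem : a - s ∈ Finset.range (a + 1) := by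
        rw [Finset.mem_range]; omega
      have hne : a - s ∉ (Finset.range (a+1)).filter (fun i => p ^ min i (a - i) ∈ S) := by
        intro hc
        rw [Finset.mem_filter] at hc
        have h1 : a - (a - s) = s := by omega
        have h2 : min (a - s) (a - (a - s)) = s := by omega
        rw [h2] at hc
        exact hnot hc.2
      have hsub : (Finset.range (a+1)).filter (fun i => p ^ min i (a - i) ∈ S)
          ⊆ (Finset.range (a+1)).erase (a - s) := by
        intro i hi
        rw [Finset.mem_erase]
        exact ⟨fun h => hne (h ▸ hi), (Finset.mem_filter.mp hi).1⟩
      calc (∑ i ∈ (Finset.range (a+1)).filter (fun i => p ^ min i (a - i) ∈ S), p ^ i)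
            + p ^ (a - s)
          ≤ (∑ i ∈ (Finset.range (a+1)).erase (a - s), p ^ i) + p ^ (a - s) := by
            exact Nat.add_le_add_right (Finset.sum_le_sum_of_subset hsub) _
        _ = ∑ i ∈ Finset.range (a+1), p ^ i := Finset.sum_erase_add _ _ hmem
    -- cast to ℝ
    have hR : (sigmaS S (p ^ a) : ℝ) + q ^ (a - s) ≤ ∑ i ∈ Finset.range (a + 1), q ^ i := by
      have := hnat
      have hcast : ((∑ i ∈ Finset.range (a + 1), p ^ i : ℕ) : ℝ)
          = ∑ i ∈ Finset.range (a + 1), q ^ i := by push_cast; rfl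
      calc (sigmaS S (p ^ a) : ℝ) + q ^ (a - s)
          = ((sigmaS S (p ^ a) + p ^ (a - s) : ℕ) : ℝ) := by push_cast; rfl
        _ ≤ ((∑ i ∈ Finset.range (a + 1), p ^ i : ℕ) : ℝ) := by exact_mod_cast this
        _ = _ := hcast
    have has : a - s = s + t := by omega
    have ha1 : a + 1 = 2 * s + t + 1 := by omega
    rw [has, ha1] at hR
    have hkey := key_ineq_aux q hq2 s t hs
    have hfinal : (sigmaS S (p ^ a) : ℝ) ≤ ∑ j ∈ Finset.range (2*s), q ^ (j + t + 1) := by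
      linarith
    rw [div_le_iff₀ (by positivity : (0:ℝ) < q ^ a)]
    calc (sigmaS S (p ^ a) : ℝ) ≤ ∑ j ∈ Finset.range (2*s), q ^ (j + t + 1) := hfinal
      _ = (∑ i ∈ Finset.range (2 * s), (q ^ i)⁻¹) * q ^ a := by
          rw [Finset.sum_mul, ← Finset.sum_range_reflect (fun j => q ^ (j + t + 1)) (2*s)]
          refine Finset.sum_congr rfl fun i hi => ?_
          have hi' : i < 2 * s := Finset.mem_range.mp hi
          have : (2 * s - 1 - i) + t + 1 + i = a := by omega
          rw [inv_mul_eq_div, eq_div_iff (by positivity : q ^ i ≠ 0), ← pow_add, this]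
  · -- Part 2: equality at a = 2s - 1
    have h3 := part3 (2 * s - 1) (by omega)
    rw [h3, Nat.sum_divisors_prime_pow hp, (by omega : 2 * s - 1 + 1 = 2 * s)]
    have hcast : ((∑ i ∈ Finset.range (2 * s), p ^ i : ℕ) : ℝ)
        = ∑ i ∈ Finset.range (2 * s), q ^ i := by push_cast; rfl
    rw [hcast, div_eq_iff (by positivity : q ^ (2 * s - 1) ≠ 0), Finset.sum_mul]
    rw [← Finset.sum_range_reflect (fun j => q ^ j) (2*s)]
    refine Finset.sum_congr rfl fun i hi => ?_
    have hi' : i < 2 * s := Finset.mem_range.mp hi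
    have : (2 * s - 1 - i) + i = 2 * s - 1 := by omega
    rw [inv_mul_eq_div, eq_div_iff (by positivity : q ^ i ≠ 0), ← pow_add, this]
end
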